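/- arXiv:2601.16709 — 13 statements merged into one kernel-verified Lean document; each statement's English description precedes it below -/
import Mathlib

section
/- Let Δt, Δx > 0 with λ = Δt/Δx. For each j ∈ ℤ let h_j ≥ 0 and φ_j be real numbers, and let F_{j+1/2} be arbitrary real numbers (mass fluxes). Define the upwind fluxes F^{φ}_{j+1/2} = φ_j·F_{j+1/2}⁺ − φ_{j+1}·F_{j+1/2}⁻ and the updates h*_j = h_j − λ·(F_{j+1/2} − F_{j−1/2}) and (hφ)*_j = h_j·φ_j − λ·(F^{φ}_{j+1/2} − F^{φ}_{j−1/2}). If for every j the CFL condition h_j − λ·(F_{j+1/2}⁺ + F_{j−1/2}⁻) ≥ 0 holds, then for every j: (i) h*_j ≥ 0, and (ii) min(φ_{j−1}, φ_j, φ_{j+1})·h*_j ≤ (hφ)*_j ≤ max(φ_{j−1}, φ_j, φ_{j+1})·h*_j. -/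
/-- the upwind prediction step preserves non-negativity of the
water height and satisfies a discrete maximum principle (in division-free
form).  Here `F j` denotes the mass flux `F_{j+1/2}` at the interface between
cells `j` and `j+1`, and for a real `a`, `a⁺ = max a 0`, `a⁻ = max (−a) 0`. -/
theorem stmt4 (Δt Δx : ℝ) (hΔt : 0 < Δt) (hΔx : 0 < Δx)
    (lam : ℝ) (hlam : lam = Δt / Δx)
    (h φ F : ℤ → ℝ) (hh : ∀ j, 0 ≤ h j)
    (Fφ : ℤ → ℝ)
    (hFφ : ∀ j, Fφ j = φ j * max (F j) 0 - φ (j + 1) * max (-(F j)) 0)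
    (hstar hφstar : ℤ → ℝ)
    (hhstar : ∀ j, hstar j = h j - lam * (F j - F (j - 1)))
    (hhφstar : ∀ j, hφstar j = h j * φ j - lam * (Fφ j - Fφ (j - 1)))
    (CFL : ∀ j, 0 ≤ h j - lam * (max (F j) 0 + max (-(F (j - 1))) 0)) :
    ∀ j, 0 ≤ hstar j
      ∧ min (min (φ (j - 1)) (φ j)) (φ (j + 1)) * hstar j ≤ hφstar j
      ∧ hφstar j ≤ max (max (φ (j - 1)) (φ j)) (φ (j + 1)) * hstar j := by
  intro j
  have hlam0 : 0 ≤ lam := by rw [hlam]; positivity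
  -- coefficients
  set a := h j - lam * (max (F j) 0 + max (-(F (j - 1))) 0) with ha
  set b := lam * max (F (j - 1)) 0 with hb
  set c := lam * max (-(F j)) 0 with hc
  have ha0 : 0 ≤ a := CFL j
  have hb0 : 0 ≤ b := mul_nonneg hlam0 (le_max_right _ _)
  have hc0 : 0 ≤ c := mul_nonneg hlam0 (le_max_right _ _)
  have hFj : F j = max (F j) 0 - max (-(F j)) 0 := by
    rcases le_total (F j) 0 with hle | hle <;> simp [max_eq_left, max_eq_right, *] <;> linarith
  have hFj1 : F (j - 1) = max (F (j - 1)) 0 - max (-(F (j - 1))) 0 := by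
    rcases le_total (F (j - 1)) 0 with hle | hle <;>
      simp [max_eq_left, max_eq_right, *] <;> linarith
  have hdec : hstar j = a + b + c := by
    rw [hhstar j, ha, hb, hc]
    nlinarith [hFj, hFj1]
  have hφdec : hφstar j = φ j * a + φ (j - 1) * b + φ (j + 1) * c := by
    have hFφj := hFφ j
    have hFφj1 := hFφ (j - 1)
    rw [show j - 1 + 1 = j by ring] at hFφj1
    rw [hhφstar j, hFφj, hFφj1, ha, hb, hc]
    ring
  set m := min (min (φ (j - 1)) (φ j)) (φ (j + 1)) with hm
  set M := max (max (φ (j - 1)) (φ j)) (φ (j + 1)) with hM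
  have hm1 : m ≤ φ (j - 1) := le_trans (min_le_left _ _) (min_le_left _ _)
  have hm2 : m ≤ φ j := le_trans (min_le_left _ _) (min_le_right _ _)
  have hm3 : m ≤ φ (j + 1) := min_le_right _ _
  have hM1 : φ (j - 1) ≤ M := le_trans (le_max_left _ _) (le_max_left _ _)
  have hM2 : φ j ≤ M := le_trans (le_max_right _ _) (le_max_left _ _)
  have hM3 : φ (j + 1) ≤ M := le_max_right _ _
  refine ⟨?_, ?_, ?_⟩
  · rw [hdec]; linarith
  · rw [hdec, hφdec]; nlinarith
  · rw [hdec, hφdec]; nlinarith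
end

section
/- Let N ≥ 1, Δt > 0, and fix one grid cell. Let l₁, …, l_N > 0 with Σ_α l_α = 1, let H > 0 and set h_α = l_α·H. Let h*_α ≥ 0 and φ*_α be real numbers, and let G_{1/2} = G_{N+1/2} = 0 and G_{3/2}, …, G_{N−1/2} be real numbers such that h_α = h*_α + Δt·(G_{α+1/2} − G_{α−1/2}) for every α. Suppose the real numbers φ₁, …, φ_N solve the implicit system h_α·φ_α = h*_α·φ*_α + Δt·(φ_{α+1/2}·G_{α+1/2} − φ_{α−1/2}·G_{α−1/2}) for all α, where φ_{α+1/2} = φ_α if G_{α+1/2} ≤ 0 and φ_{α+1/2} = φ_{α+1} if G_{α+1/2} > 0. Then min_{β∈{1,…,N}} φ*_β ≤ φ_α ≤ max_{β∈{1,…,N}} φ*_β for every α, without any restriction on Δt. -/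
/-!
Subtracting `φ_α` times the mass balance from the transport equation gives
`h*_α (φ_α - φ*_α) = Δt ((φ_{α+1/2} - φ_α) G_{α+1/2} - (φ_{α-1/2} - φ_α) G_{α-1/2})`.
At a cell `β` where `φ` is maximal, upwinding makes the first flux difference `≤ 0` and
the second `≥ 0`, so `φ_β ≤ φ*_β` as soon as `h*_β > 0`. If `h*_β = 0`, both differences
vanish and the mass balance forces `G_{β-1/2} < G_{β+1/2}`, so the maximum is shared
by the neighbour from which the flow comes: the cell above when `G_{β+1/2} > 0`, the cell
below (again with `G ≤ 0`) otherwise. Since `G` vanishes at the bottom and at the free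
surface, the largest maximizer has `G ≤ 0`, and the smallest maximizer with `G ≤ 0` then
has `h* > 0`. The lower bound is the upper bound for `-φ`.
-/

open Finset

/-- The upwind interface value `φ_{α+1/2}`. -/
noncomputable def upwind (G φ : ℕ → ℝ) (α : ℕ) : ℝ := if G α ≤ 0 then φ α else φ (α + 1)

lemma upwind_neg (G φ : ℕ → ℝ) (α : ℕ) : upwind G (-φ) α = -upwind G φ α := by
  unfold upwind; split_ifs <;> rfl

section Upwind

variable {G φ : ℕ → ℝ} {α : ℕ}

lemma upwind_sub_mul_nonpos (h : 0 < G α → φ (α + 1) ≤ φ α) :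
    (upwind G φ α - φ α) * G α ≤ 0 := by
  unfold upwind
  split_ifs with hG
  · simp
  · exact mul_nonpos_of_nonpos_of_nonneg (sub_nonpos.2 (h (not_le.1 hG))) (not_le.1 hG).le

lemma succ_eq_of_upwind_sub_mul_eq_zero (hG : 0 < G α)
    (h0 : (upwind G φ α - φ α) * G α = 0) : φ (α + 1) = φ α := by
  rw [upwind, if_neg hG.not_ge] at h0
  exact sub_eq_zero.1 ((mul_eq_zero.1 h0).resolve_right hG.ne')

lemma upwind_sub_succ_mul_nonneg (h : G α ≤ 0 → φ α ≤ φ (α + 1)) :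
    0 ≤ (upwind G φ α - φ (α + 1)) * G α := by
  unfold upwind
  split_ifs with hG
  · exact mul_nonneg_of_nonpos_of_nonpos (sub_nonpos.2 (h hG)) hG
  · simp

lemma eq_succ_of_upwind_sub_succ_mul_eq_zero (hG : G α < 0)
    (h0 : (upwind G φ α - φ (α + 1)) * G α = 0) : φ α = φ (α + 1) := by
  rw [upwind, if_pos hG.le] at h0
  exact sub_eq_zero.1 ((mul_eq_zero.1 h0).resolve_right hG.ne)

variable {N β : ℕ}

lemma upwind_sub_mul_nonpos_of_isMaxOn (hGN : G N = 0) (hβ : β ∈ Icc 1 N)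
    (hmax : IsMaxOn φ (Icc 1 N) β) : (upwind G φ β - φ β) * G β ≤ 0 :=
  upwind_sub_mul_nonpos fun hG ↦ hmax <| mem_Icc.2
    ⟨by omega, lt_of_le_of_ne (mem_Icc.1 hβ).2 fun hβN ↦ hG.ne' (hβN ▸ hGN)⟩

lemma upwind_sub_succ_mul_nonneg_of_isMaxOn (hG0 : G 0 = 0) (hβ : β ∈ Icc 1 N)
    (hmax : IsMaxOn φ (Icc 1 N) β) :
    0 ≤ (upwind G φ (β - 1) - φ (β - 1 + 1)) * G (β - 1) := by
  obtain ⟨hβ1, hβN⟩ := mem_Icc.1 hβ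
  obtain rfl | hβ2 := hβ1.eq_or_lt
  · simp [hG0]
  · refine upwind_sub_succ_mul_nonneg fun _ ↦ ?_
    rw [Nat.sub_add_cancel hβ1]
    exact hmax (mem_Icc.2 ⟨by omega, by omega⟩)

end Upwind

/-- Layers are `1, …, N` and `G α` is `G_{α+1/2}`. -/
structure IsUpwindCorrection (N : ℕ) (Δt : ℝ) (h hstar φstar G φ : ℕ → ℝ) : Prop where
  height_eq : ∀ α ∈ Icc 1 N, h α = hstar α + Δt * (G α - G (α - 1))
  transport_eq : ∀ α ∈ Icc 1 N, h α * φ α =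
    hstar α * φstar α + Δt * (upwind G φ α * G α - upwind G φ (α - 1) * G (α - 1))

namespace IsUpwindCorrection

variable {N : ℕ} {Δt : ℝ} {h hstar φstar G φ : ℕ → ℝ}

lemma neg (hc : IsUpwindCorrection N Δt h hstar φstar G φ) :
    IsUpwindCorrection N Δt h hstar (-φstar) G (-φ) where
  height_eq := hc.height_eq
  transport_eq α hα := by
    simp only [upwind_neg, Pi.neg_apply]
    linear_combination -hc.transport_eq α hα

lemma residual_eq (hc : IsUpwindCorrection N Δt h hstar φstar G φ) {α : ℕ}
    (hα : α ∈ Icc 1 N) :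
    hstar α * (φ α - φstar α) = Δt * ((upwind G φ α - φ α) * G α
      - (upwind G φ (α - 1) - φ (α - 1 + 1)) * G (α - 1)) := by
  rw [Nat.sub_add_cancel (mem_Icc.1 hα).1]
  linear_combination hc.transport_eq α hα - φ α * hc.height_eq α hα

variable {β : ℕ}

lemma le_of_isMaxOn (hc : IsUpwindCorrection N Δt h hstar φstar G φ) (hΔt : 0 ≤ Δt)
    (hG0 : G 0 = 0) (hGN : G N = 0) (hβ : β ∈ Icc 1 N) (hmax : IsMaxOn φ (Icc 1 N) β)
    (hpos : 0 < hstar β) : φ β ≤ φstar β := by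
  have hA := upwind_sub_mul_nonpos_of_isMaxOn hGN hβ hmax
  have hB := upwind_sub_succ_mul_nonneg_of_isMaxOn hG0 hβ hmax
  have hres : hstar β * (φ β - φstar β) ≤ 0 :=
    hc.residual_eq hβ ▸ mul_nonpos_of_nonneg_of_nonpos hΔt (by linarith)
  linarith [nonpos_of_mul_nonpos_right hres hpos]

lemma fluxes_eq_zero_of_isMaxOn (hc : IsUpwindCorrection N Δt h hstar φstar G φ)
    (hΔt : 0 < Δt) (hG0 : G 0 = 0) (hGN : G N = 0) (hβ : β ∈ Icc 1 N)
    (hmax : IsMaxOn φ (Icc 1 N) β) (hzero : hstar β = 0) :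
    (upwind G φ β - φ β) * G β = 0 ∧
      (upwind G φ (β - 1) - φ (β - 1 + 1)) * G (β - 1) = 0 := by
  have hA := upwind_sub_mul_nonpos_of_isMaxOn hGN hβ hmax
  have hB := upwind_sub_succ_mul_nonneg_of_isMaxOn hG0 hβ hmax
  have hres := hc.residual_eq hβ
  rw [hzero, zero_mul, zero_eq_mul] at hres
  constructor <;> linarith [hres.resolve_left hΔt.ne']

lemma isMaxOn_succ (hc : IsUpwindCorrection N Δt h hstar φstar G φ) (hΔt : 0 < Δt)
    (hG0 : G 0 = 0) (hGN : G N = 0) (hβ : β ∈ Icc 1 N) (hmax : IsMaxOn φ (Icc 1 N) β)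
    (hzero : hstar β = 0) (hG : 0 < G β) :
    β + 1 ∈ Icc 1 N ∧ IsMaxOn φ (Icc 1 N) (β + 1) := by
  have hsucc := succ_eq_of_upwind_sub_mul_eq_zero hG
    (hc.fluxes_eq_zero_of_isMaxOn hΔt hG0 hGN hβ hmax hzero).1
  have hβN : β ≠ N := fun hβN ↦ hG.ne' (hβN ▸ hGN)
  refine ⟨mem_Icc.2 ⟨by omega, by have := (mem_Icc.1 hβ).2; omega⟩, ?_⟩
  exact fun γ hγ ↦ hsucc ▸ hmax hγ

lemma isMaxOn_pred (hc : IsUpwindCorrection N Δt h hstar φstar G φ) (hΔt : 0 < Δt)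
    (hG0 : G 0 = 0) (hGN : G N = 0) (hβ : β ∈ Icc 1 N) (hmax : IsMaxOn φ (Icc 1 N) β)
    (hzero : hstar β = 0) (hh : 0 < h β) (hG : G β ≤ 0) :
    β - 1 ∈ Icc 1 N ∧ G (β - 1) ≤ 0 ∧ IsMaxOn φ (Icc 1 N) (β - 1) := by
  have hGlt : G (β - 1) < G β := by
    have := hc.height_eq β hβ
    rw [hzero, zero_add] at this
    exact sub_pos.1 (pos_of_mul_pos_right (this ▸ hh) hΔt.le)
  have hpred := eq_succ_of_upwind_sub_succ_mul_eq_zero (hGlt.trans_le hG)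
    (hc.fluxes_eq_zero_of_isMaxOn hΔt hG0 hGN hβ hmax hzero).2
  obtain ⟨hβ1, hβN⟩ := mem_Icc.1 hβ
  have hβ2 : β - 1 ≠ 0 := fun h0 ↦ (h0 ▸ hG0 ▸ hGlt.trans_le hG).false
  rw [Nat.sub_add_cancel hβ1] at hpred
  refine ⟨mem_Icc.2 ⟨by omega, by omega⟩, by linarith, fun γ hγ ↦ hpred ▸ hmax hγ⟩

lemma exists_isMaxOn_hstar_pos (hc : IsUpwindCorrection N Δt h hstar φstar G φ)
    (hΔt : 0 < Δt) (hh : ∀ α ∈ Icc 1 N, 0 < h α) (hhstar : ∀ α ∈ Icc 1 N, 0 ≤ hstar α)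
    (hG0 : G 0 = 0) (hGN : G N = 0) (hne : (Icc 1 N).Nonempty) :
    ∃ β ∈ Icc 1 N, IsMaxOn φ (Icc 1 N) β ∧ 0 < hstar β := by
  classical
  by_contra! hdry
  have hzero β (hβ : β ∈ Icc 1 N) (hmax : IsMaxOn φ (Icc 1 N) β) : hstar β = 0 :=
    (hdry β hβ hmax).antisymm (hhstar β hβ)
  let S := (Icc 1 N).filter (IsMaxOn φ (Icc 1 N))
  have hS : S.Nonempty := by
    obtain ⟨β, hβ, hmax⟩ := exists_max_image _ φ hne
    exact ⟨β, mem_filter.2 ⟨hβ, fun γ hγ ↦ hmax γ hγ⟩⟩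
  obtain ⟨hb, hbmax⟩ := mem_filter.1 (S.max'_mem hS)
  have hGb : G (S.max' hS) ≤ 0 := by
    by_contra! hG
    obtain ⟨hb1, hb1max⟩ := hc.isMaxOn_succ hΔt hG0 hGN hb hbmax (hzero _ hb hbmax) hG
    have := S.le_max' _ (mem_filter.2 ⟨hb1, hb1max⟩)
    omega
  let T := S.filter (fun β ↦ G β ≤ 0)
  have hT : T.Nonempty := ⟨_, mem_filter.2 ⟨S.max'_mem hS, hGb⟩⟩
  obtain ⟨ha, hGa⟩ := mem_filter.1 (T.min'_mem hT)
  obtain ⟨ha, hamax⟩ := mem_filter.1 ha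
  obtain ⟨ha1, hGa1, ha1max⟩ :=
    hc.isMaxOn_pred hΔt hG0 hGN ha hamax (hzero _ ha hamax) (hh _ ha) hGa
  have := T.min'_le _ (mem_filter.2 ⟨mem_filter.2 ⟨ha1, ha1max⟩, hGa1⟩)
  have := (mem_Icc.1 ha1).1
  omega

lemma exists_le (hc : IsUpwindCorrection N Δt h hstar φstar G φ)
    (hΔt : 0 < Δt) (hh : ∀ α ∈ Icc 1 N, 0 < h α) (hhstar : ∀ α ∈ Icc 1 N, 0 ≤ hstar α)
    (hG0 : G 0 = 0) (hGN : G N = 0) {α : ℕ} (hα : α ∈ Icc 1 N) :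
    ∃ β ∈ Icc 1 N, φ α ≤ φstar β := by
  obtain ⟨β, hβ, hmax, hpos⟩ := hc.exists_isMaxOn_hstar_pos hΔt hh hhstar hG0 hGN ⟨α, hα⟩
  exact ⟨β, hβ, (hmax hα).trans (hc.le_of_isMaxOn hΔt.le hG0 hGN hβ hmax hpos)⟩

end IsUpwindCorrection

theorem stmt6_general (N : ℕ) (hN : 1 ≤ N) (Δt : ℝ) (hΔt : 0 < Δt)
    (l : ℕ → ℝ) (hl : ∀ α ∈ Finset.Icc 1 N, 0 < l α)
    (H : ℝ) (hH : 0 < H)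
    (h : ℕ → ℝ) (hdef : ∀ α, h α = l α * H)
    (hstar φstar : ℕ → ℝ)
    (hhstar : ∀ α ∈ Finset.Icc 1 N, 0 ≤ hstar α)
    (G : ℕ → ℝ) (hG0 : G 0 = 0) (hGN : G N = 0)
    (hrel : ∀ α ∈ Finset.Icc 1 N, h α = hstar α + Δt * (G α - G (α - 1)))
    (φ : ℕ → ℝ)
    (φhalf : ℕ → ℝ)
    (hφhalf : ∀ α, φhalf α = if G α ≤ 0 then φ α else φ (α + 1))
    (himpl : ∀ α ∈ Finset.Icc 1 N,
      h α * φ α = hstar α * φstar α + Δt * (φhalf α * G α - φhalf (α - 1) * G (α - 1))) :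
    ∀ α ∈ Finset.Icc 1 N,
      (Finset.Icc 1 N).inf' ⟨1, Finset.mem_Icc.mpr ⟨le_refl 1, hN⟩⟩ φstar ≤ φ α
      ∧ φ α ≤ (Finset.Icc 1 N).sup' ⟨1, Finset.mem_Icc.mpr ⟨le_refl 1, hN⟩⟩ φstar := by
  obtain rfl : φhalf = upwind G φ := funext hφhalf
  have hc : IsUpwindCorrection N Δt h hstar φstar G φ := ⟨hrel, himpl⟩
  have hh α (hα : α ∈ Icc 1 N) : 0 < h α := hdef α ▸ mul_pos (hl α hα) hH
  intro α hα
  obtain ⟨β, hβ, hlow⟩ := hc.neg.exists_le hΔt hh hhstar hG0 hGN hα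
  obtain ⟨γ, hγ, hup⟩ := hc.exists_le hΔt hh hhstar hG0 hGN hα
  exact ⟨inf'_le_of_le _ hβ (neg_le_neg_iff.1 hlow), le_sup'_of_le _ hγ hup⟩

/-- the implicit correction step of the baroclinic scheme in one
cell satisfies, without any restriction on `Δt`, the vertical maximum principle
`min_β φ*_β ≤ φ_α ≤ max_β φ*_β`.  Here `G α` stands for the mass-exchange term
`G_{α+1/2}` (so `G 0 = G_{1/2} = 0` and `G N = G_{N+1/2} = 0`), and `φhalf α`
is the implicit upwind interface value `φ_{α+1/2}`. -/
theorem stmt6 (N : ℕ) (hN : 1 ≤ N) (Δt : ℝ) (hΔt : 0 < Δt)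
    (l : ℕ → ℝ) (hl : ∀ α ∈ Finset.Icc 1 N, 0 < l α)
    (hlsum : ∑ α ∈ Finset.Icc 1 N, l α = 1)
    (H : ℝ) (hH : 0 < H)
    (h : ℕ → ℝ) (hdef : ∀ α, h α = l α * H)
    (hstar φstar : ℕ → ℝ)
    (hhstar : ∀ α ∈ Finset.Icc 1 N, 0 ≤ hstar α)
    (G : ℕ → ℝ) (hG0 : G 0 = 0) (hGN : G N = 0)
    (hrel : ∀ α ∈ Finset.Icc 1 N, h α = hstar α + Δt * (G α - G (α - 1)))
    (φ : ℕ → ℝ)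
    (φhalf : ℕ → ℝ)
    (hφhalf : ∀ α, φhalf α = if G α ≤ 0 then φ α else φ (α + 1))
    (himpl : ∀ α ∈ Finset.Icc 1 N,
      h α * φ α = hstar α * φstar α + Δt * (φhalf α * G α - φhalf (α - 1) * G (α - 1))) :
    ∀ α ∈ Finset.Icc 1 N,
      (Finset.Icc 1 N).inf' ⟨1, Finset.mem_Icc.mpr ⟨le_refl 1, hN⟩⟩ φstar ≤ φ α
      ∧ φ α ≤ (Finset.Icc 1 N).sup' ⟨1, Finset.mem_Icc.mpr ⟨le_refl 1, hN⟩⟩ φstar :=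
  stmt6_general N hN Δt hΔt l hl H hH h hdef hstar φstar hhstar G hG0 hGN hrel φ φhalf hφhalf himpl
end

section
/- Let Δt, Δx > 0 with λ = Δt/Δx. For each j ∈ ℤ let H_j ≥ 0 and φ_j be real numbers and 𝓕_{j+1/2} be arbitrary real numbers. Define 𝓕^{φ}_{j+1/2} = φ_j·𝓕_{j+1/2}⁺ − φ_{j+1}·𝓕_{j+1/2}⁻, H^{new}_j = H_j − λ·(𝓕_{j+1/2} − 𝓕_{j−1/2}) and (Hφ)^{new}_j = H_j·φ_j − λ·(𝓕^{φ}_{j+1/2} − 𝓕^{φ}_{j−1/2}). If for every j the condition H_j − λ·(𝓕_{j+1/2}⁺ + 𝓕_{j−1/2}⁻) ≥ 0 holds, then for every j: (i) H^{new}_j ≥ 0, and (ii) min(φ_{j−1}, φ_j, φ_{j+1})·H^{new}_j ≤ (Hφ)^{new}_j ≤ max(φ_{j−1}, φ_j, φ_{j+1})·H^{new}_j. -/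
/-- the barotropic subcycling update with accumulated mass fluxes
preserves non-negativity of the total water height and satisfies a discrete
maximum principle in division-free form.  Here `𝓕 j` denotes the accumulated
mass flux `𝓕_{j+1/2}`, and for a real `a`, `a⁺ = max a 0`, `a⁻ = max (−a) 0`. -/
theorem stmt8 (Δt Δx : ℝ) (hΔt : 0 < Δt) (hΔx : 0 < Δx)
    (lam : ℝ) (hlam : lam = Δt / Δx)
    (H φ 𝓕 : ℤ → ℝ) (hH : ∀ j, 0 ≤ H j)
    (Fφ : ℤ → ℝ)
    (hFφ : ∀ j, Fφ j = φ j * max (𝓕 j) 0 - φ (j + 1) * max (-(𝓕 j)) 0)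
    (Hnew Hφnew : ℤ → ℝ)
    (hHnew : ∀ j, Hnew j = H j - lam * (𝓕 j - 𝓕 (j - 1)))
    (hHφnew : ∀ j, Hφnew j = H j * φ j - lam * (Fφ j - Fφ (j - 1)))
    (CFL : ∀ j, 0 ≤ H j - lam * (max (𝓕 j) 0 + max (-(𝓕 (j - 1))) 0)) :
    ∀ j, 0 ≤ Hnew j
      ∧ min (min (φ (j - 1)) (φ j)) (φ (j + 1)) * Hnew j ≤ Hφnew j
      ∧ Hφnew j ≤ max (max (φ (j - 1)) (φ j)) (φ (j + 1)) * Hnew j := by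
  have hlam0 : 0 < lam := hlam ▸ div_pos hΔt hΔx
  intro j
  set p := max (𝓕 j) 0 with hp
  set q := max (-(𝓕 j)) 0 with hq
  set r := max (𝓕 (j - 1)) 0 with hr
  set s := max (-(𝓕 (j - 1))) 0 with hs
  have hFj : 𝓕 j = p - q := by
    rw [hp, hq]; rcases le_total (𝓕 j) 0 with h | h
    · rw [max_eq_right h, max_eq_left (by linarith)]; ring
    · rw [max_eq_left h, max_eq_right (by linarith)]; ring
  have hFj1 : 𝓕 (j - 1) = r - s := by
    rw [hr, hs]; rcases le_total (𝓕 (j - 1)) 0 with h | h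
    · rw [max_eq_right h, max_eq_left (by linarith)]; ring
    · rw [max_eq_left h, max_eq_right (by linarith)]; ring
  set a := H j - lam * (p + s) with ha
  have ha0 : 0 ≤ a := CFL j
  have hb0 : 0 ≤ lam * q := mul_nonneg hlam0.le (le_max_right _ _)
  have hc0 : 0 ≤ lam * r := mul_nonneg hlam0.le (le_max_right _ _)
  have hdec : Hnew j = a + lam * q + lam * r := by
    rw [hHnew j, hFj, hFj1, ha]; ring
  have hj1 : j - 1 + 1 = j := by ring
  have hdecφ : Hφnew j = φ j * a + φ (j + 1) * (lam * q) + φ (j - 1) * (lam * r) := by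
    rw [hHφnew j, hFφ j, hFφ (j - 1), hj1, ← hp, ← hq, ← hr, ← hs, ha]; ring
  set m := min (min (φ (j - 1)) (φ j)) (φ (j + 1)) with hm
  set M := max (max (φ (j - 1)) (φ j)) (φ (j + 1)) with hM
  have hm1 : m ≤ φ (j - 1) := le_trans (min_le_left _ _) (min_le_left _ _)
  have hm2 : m ≤ φ j := le_trans (min_le_left _ _) (min_le_right _ _)
  have hm3 : m ≤ φ (j + 1) := min_le_right _ _
  have hM1 : φ (j - 1) ≤ M := le_trans (le_max_left _ _) (le_max_left _ _)
  have hM2 : φ j ≤ M := le_trans (le_max_right _ _) (le_max_left _ _)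
  have hM3 : φ (j + 1) ≤ M := le_max_right _ _
  refine ⟨by rw [hdec]; positivity, ?_, ?_⟩
  · rw [hdec, hdecφ]
    nlinarith [mul_le_mul_of_nonneg_right hm2 ha0, mul_le_mul_of_nonneg_right hm3 hb0,
      mul_le_mul_of_nonneg_right hm1 hc0]
  · rw [hdec, hdecφ]
    nlinarith [mul_le_mul_of_nonneg_right hM2 ha0, mul_le_mul_of_nonneg_right hM3 hb0,
      mul_le_mul_of_nonneg_right hM1 hc0]
end

section
/- Let N ≥ 1 and let l₁, …, l_N > 0 with Σ_α l_α = 1. For each j ∈ ℤ let h_j ≥ 0 and σ_{α,j} (α = 1,…,N) be real numbers with Σ_{α=1}^N l_α·h_j·σ_{α,j} = 0, and set h_{α,j} = l_α·h_j. Define the upwind mass flux F^{α}_{j+1/2} = h_{α,j}·σ_{α,j} if h_{α,j} < h_{α,j+1} and F^{α}_{j+1/2} = h_{α,j+1}·σ_{α,j+1} if h_{α,j} ≥ h_{α,j+1}. Then Σ_{α=1}^N F^{α}_{j+1/2} = 0 for every j; consequently, for any λ > 0, the updated total height h_j − λ·(Σ_α F^{α}_{j+1/2} − Σ_α F^{α}_{j−1/2})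 equals h_j. -/
/-- with the mass flux obtained by upwinding `h_α σ_α` according
to the comparison of the layer heights in the two neighboring cells, the total
mass flux vanishes, so the total water height does not change during the
baroclinic prediction step.  Here `F α j` denotes the flux `F^α_{j+1/2}` at the
interface between cells `j` and `j+1`. -/
theorem stmt9 (N : ℕ) (hN : 1 ≤ N)
    (l : ℕ → ℝ) (hl : ∀ α ∈ Finset.Icc 1 N, 0 < l α)
    (hlsum : ∑ α ∈ Finset.Icc 1 N, l α = 1)
    (h : ℤ → ℝ) (hh : ∀ j, 0 ≤ h j)
    (σ : ℕ → ℤ → ℝ)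
    (hσsum : ∀ j, ∑ α ∈ Finset.Icc 1 N, l α * h j * σ α j = 0)
    (ha : ℕ → ℤ → ℝ) (hha : ∀ α j, ha α j = l α * h j)
    (F : ℕ → ℤ → ℝ)
    (hF : ∀ α j, F α j = if ha α j < ha α (j + 1)
        then ha α j * σ α j else ha α (j + 1) * σ α (j + 1)) :
    ∀ j, (∑ α ∈ Finset.Icc 1 N, F α j = 0)
      ∧ ∀ lam : ℝ, 0 < lam →
        h j - lam * ((∑ α ∈ Finset.Icc 1 N, F α j) - ∑ α ∈ Finset.Icc 1 N, F α (j - 1))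
          = h j := by
  have key : ∀ j : ℤ, ∑ α ∈ Finset.Icc 1 N, F α j = 0 := by
    intro j
    by_cases hc : h j < h (j + 1)
    · have : ∑ α ∈ Finset.Icc 1 N, F α j
          = ∑ α ∈ Finset.Icc 1 N, l α * h j * σ α j := by
        apply Finset.sum_congr rfl
        intro α hα
        rw [hF, hha, hha, if_pos (by exact mul_lt_mul_of_pos_left hc (hl α hα))]
      rw [this, hσsum]
    · have : ∑ α ∈ Finset.Icc 1 N, F α j
          = ∑ α ∈ Finset.Icc 1 N, l α * h (j + 1) * σ α (j + 1) := by
        apply Finset.sum_congr rfl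
        intro α hα
        rw [hF, hha, hha, if_neg (by
          intro hlt
          exact hc (lt_of_mul_lt_mul_left hlt (le_of_lt (hl α hα))))]
      rw [this, hσsum]
  intro j
  refine ⟨key j, fun lam _ => ?_⟩
  rw [key j, key (j - 1)]
  ring
end

section
/- Let N ≥ 1 and let l₁, …, l_N > 0 with Σ_α l_α = 1, let Δt, Δx > 0 with λ = Δt/Δx. For each j ∈ ℤ let h_j ≥ 0 and σ_{α,j} be real numbers, set h_{α,j} = l_α·h_j, and define F^{α}_{j+1/2} = h_{α,j}·σ_{α,j} if h_{α,j} < h_{α,j+1} and F^{α}_{j+1/2} = h_{α,j+1}·σ_{α,j+1} if h_{α,j} ≥ h_{α,j+1}. Suppose σ is bounded and Δt·sup_{α,j}|σ_{α,j}| ≤ Δx/2. Then for every α and j, h_{α,j} − λ·((F^{α}_{j+1/2})⁺ + (F^{α}_{j−1/2})⁻) ≥ 0; in particular the updated layer heights h*_{α,j} = h_{α,j} − λ·(F^{α}_{j+1/2} − F^{α}_{j−1/2}) are non-negative. -/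
/-- under the CFL condition `Δt·sup_{α,j}|σ_{α,j}| ≤ Δx/2`
(expressed via a bound `C` on `|σ|` with `Δt·C ≤ Δx/2`), the upwinded
baroclinic mass fluxes satisfy
`h_{α,j} − λ((F^α_{j+1/2})⁺ + (F^α_{j−1/2})⁻) ≥ 0`, and in particular the
updated layer heights are non-negative.  Here `F α j` denotes `F^α_{j+1/2}`,
and for a real `a`, `a⁺ = max a 0`, `a⁻ = max (−a) 0`. -/
theorem stmt10 (N : ℕ) (hN : 1 ≤ N)
    (l : ℕ → ℝ) (hl : ∀ α ∈ Finset.Icc 1 N, 0 < l α)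
    (hlsum : ∑ α ∈ Finset.Icc 1 N, l α = 1)
    (Δt Δx : ℝ) (hΔt : 0 < Δt) (hΔx : 0 < Δx)
    (lam : ℝ) (hlam : lam = Δt / Δx)
    (h : ℤ → ℝ) (hh : ∀ j, 0 ≤ h j)
    (σ : ℕ → ℤ → ℝ)
    (ha : ℕ → ℤ → ℝ) (hha : ∀ α j, ha α j = l α * h j)
    (F : ℕ → ℤ → ℝ)
    (hF : ∀ α j, F α j = if ha α j < ha α (j + 1)
        then ha α j * σ α j else ha α (j + 1) * σ α (j + 1))
    (C : ℝ) (hC : ∀ α ∈ Finset.Icc 1 N, ∀ j, |σ α j| ≤ C)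
    (hCFL : Δt * C ≤ Δx / 2)
    (hstar : ℕ → ℤ → ℝ)
    (hhstar : ∀ α j, hstar α j = ha α j - lam * (F α j - F α (j - 1))) :
    ∀ α ∈ Finset.Icc 1 N, ∀ j,
      0 ≤ ha α j - lam * (max (F α j) 0 + max (-(F α (j - 1))) 0)
      ∧ 0 ≤ hstar α j := by
  intro α hα j
  have hha0 : ∀ k, 0 ≤ ha α k := fun k => by
    rw [hha]; exact mul_nonneg (hl α hα).le (hh k)
  have hC0 : 0 ≤ C := (abs_nonneg _).trans (hC α hα 0)
  have hlam0 : 0 ≤ lam := by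
    rw [hlam]; positivity
  -- bound on the flux
  have key : ∀ k, |F α k| ≤ C * ha α k ∧ |F α k| ≤ C * ha α (k + 1) := by
    intro k
    rw [hF]
    by_cases hcase : ha α k < ha α (k + 1)
    · rw [if_pos hcase]
      have : |ha α k * σ α k| ≤ C * ha α k := by
        rw [abs_mul, abs_of_nonneg (hha0 k), mul_comm]
        exact mul_le_mul_of_nonneg_right (hC α hα k) (hha0 k)
      exact ⟨this, this.trans (mul_le_mul_of_nonneg_left hcase.le hC0)⟩
    · rw [if_neg hcase]
      push_neg at hcase
      have : |ha α (k + 1) * σ α (k + 1)| ≤ C * ha α (k + 1) := by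
        rw [abs_mul, abs_of_nonneg (hha0 (k + 1)), mul_comm]
        exact mul_le_mul_of_nonneg_right (hC α hα (k + 1)) (hha0 (k + 1))
      exact ⟨this.trans (mul_le_mul_of_nonneg_left hcase hC0), this⟩
  have b1 : max (F α j) 0 ≤ C * ha α j := by
    refine max_le ((le_abs_self _).trans (key j).1) (mul_nonneg hC0 (hha0 j))
  have b2 : max (-(F α (j - 1))) 0 ≤ C * ha α j := by
    have := (key (j - 1)).2
    rw [sub_add_cancel] at this
    exact max_le ((neg_le_abs _).trans this) (mul_nonneg hC0 (hha0 j))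
  have hmain : 0 ≤ ha α j - lam * (max (F α j) 0 + max (-(F α (j - 1))) 0) := by
    have hsum : lam * (max (F α j) 0 + max (-(F α (j - 1))) 0)
        ≤ lam * (2 * (C * ha α j)) :=
      mul_le_mul_of_nonneg_left (by linarith) hlam0
    have h2 : lam * (2 * (C * ha α j)) ≤ ha α j := by
      rw [hlam, div_mul_eq_mul_div, div_le_iff₀ hΔx]
      have := mul_le_mul_of_nonneg_right hCFL (hha0 j)
      nlinarith [hha0 j]
    linarith
  refine ⟨hmain, ?_⟩
  rw [hhstar]
  have hle : F α j - F α (j - 1) ≤ max (F α j) 0 + max (-(F α (j - 1))) 0 := by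
    have := le_max_left (F α j) 0
    have := le_max_left (-(F α (j - 1))) 0
    linarith
  have := mul_le_mul_of_nonneg_left hle hlam0
  linarith
end

section
/- Let N ≥ 1, let Δt, Δx > 0 with λ = Δt/Δx. For each j ∈ ℤ and α ∈ {1,…,N} let h_{α,j} ≥ 0 and σ_{α,j} be real numbers with σ bounded. Define A_{j+1/2} = max over α ∈ {1,…,N} and k ∈ {0,1} of |σ_{α,j+k}|, and the Rusanov flux F^{α}_{j+1/2} = (h_{α,j}·σ_{α,j} + h_{α,j+1}·σ_{α,j+1})/2 − A_{j+1/2}·(h_{α,j+1} − h_{α,j})/2. If Δt·sup_{α,j}|σ_{α,j}| ≤ Δx, then the updated layer heights h*_{α,j} = h_{α,j} − λ·(F^{α}_{j+1/2} − F^{α}_{j−1/2}) are non-negative for every α and j. -/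
/-- with the Rusanov flux
`F^α_{j+1/2} = (h_{α,j}σ_{α,j} + h_{α,j+1}σ_{α,j+1})/2 − A_{j+1/2}(h_{α,j+1} − h_{α,j})/2`,
where `A_{j+1/2} = max_{α∈{1,…,N}, k∈{0,1}} |σ_{α,j+k}|`, the updated layer
heights stay non-negative under the CFL condition `Δt·sup_{α,j}|σ_{α,j}| ≤ Δx`
(expressed via a bound `C` on `|σ|` with `Δt·C ≤ Δx`).  Here `F α j` denotes
`F^α_{j+1/2}` and `A j` denotes `A_{j+1/2}`. -/
theorem stmt11 (N : ℕ) (hN : 1 ≤ N)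
    (Δt Δx : ℝ) (hΔt : 0 < Δt) (hΔx : 0 < Δx)
    (lam : ℝ) (hlam : lam = Δt / Δx)
    (ha : ℕ → ℤ → ℝ) (hha : ∀ α ∈ Finset.Icc 1 N, ∀ j, 0 ≤ ha α j)
    (σ : ℕ → ℤ → ℝ)
    (C : ℝ) (hC : ∀ α ∈ Finset.Icc 1 N, ∀ j, |σ α j| ≤ C)
    (hCFL : Δt * C ≤ Δx)
    (A : ℤ → ℝ)
    (hA : ∀ j, A j = max
      ((Finset.Icc 1 N).sup' ⟨1, Finset.mem_Icc.mpr ⟨le_refl 1, hN⟩⟩ (fun α => |σ α j|))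
      ((Finset.Icc 1 N).sup' ⟨1, Finset.mem_Icc.mpr ⟨le_refl 1, hN⟩⟩ (fun α => |σ α (j + 1)|)))
    (F : ℕ → ℤ → ℝ)
    (hF : ∀ α j, F α j = (ha α j * σ α j + ha α (j + 1) * σ α (j + 1)) / 2
        - A j * (ha α (j + 1) - ha α j) / 2)
    (hstar : ℕ → ℤ → ℝ)
    (hhstar : ∀ α j, hstar α j = ha α j - lam * (F α j - F α (j - 1))) :
    ∀ α ∈ Finset.Icc 1 N, ∀ j, 0 ≤ hstar α j := by
  intro α hα j
  have hCnn : 0 ≤ C := le_trans (abs_nonneg _) (hC α hα 0)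
  have hAC : ∀ k, A k ≤ C := by
    intro k
    rw [hA]
    apply max_le <;> exact Finset.sup'_le _ _ fun b hb => hC b hb _
  have hA1 : |σ α (j + 1)| ≤ A j := by
    rw [hA]
    exact le_max_of_le_right (Finset.le_sup' (fun b => |σ b (j + 1)|) hα)
  have hA2 : |σ α (j - 1)| ≤ A (j - 1) := by
    rw [hA]
    exact le_max_of_le_left (Finset.le_sup' (fun b => |σ b (j - 1)|) hα)
  have hlam0 : 0 ≤ lam := by rw [hlam]; positivity
  have hlamC : lam * C ≤ 1 := by
    rw [hlam, div_mul_eq_mul_div, div_le_one hΔx]; linarith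
  have key : hstar α j = ha α j * (1 - lam * (A j + A (j - 1)) / 2)
      + lam / 2 * ha α (j + 1) * (A j - σ α (j + 1))
      + lam / 2 * ha α (j - 1) * (A (j - 1) + σ α (j - 1)) := by
    rw [hhstar, hF, hF]
    simp only [sub_add_cancel]
    ring
  rw [key]
  have h1 := hha α hα j
  have h2 := hha α hα (j + 1)
  have h3 := hha α hα (j - 1)
  have e1 := abs_le.mp hA1
  have e2 := abs_le.mp hA2
  have hAj := hAC j
  have hAj1 := hAC (j - 1)
  have t1 : 0 ≤ ha α j * (1 - lam * (A j + A (j - 1)) / 2) := by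
    apply mul_nonneg h1
    nlinarith [mul_le_mul_of_nonneg_left hAj hlam0, mul_le_mul_of_nonneg_left hAj1 hlam0]
  have t2 : 0 ≤ lam / 2 * ha α (j + 1) * (A j - σ α (j + 1)) := by
    apply mul_nonneg (mul_nonneg (by linarith) h2); linarith [e1.2]
  have t3 : 0 ≤ lam / 2 * ha α (j - 1) * (A (j - 1) + σ α (j - 1)) := by
    apply mul_nonneg (mul_nonneg (by linarith) h3); linarith [e2.1]
  linarith
end

section
/- Let N ≥ 1 and l₁, …, l_N > 0 with Σ_α l_α = 1, let Δt, Δx > 0 with λ = Δt/Δx. For each j ∈ ℤ let h_j ≥ 0 and σ_{α,j} be real numbers with h_{α,j} = l_α·h_j and Σ_{α=1}^N h_{α,j}·σ_{α,j} = 0 for all j. Let A_{j+1/2} = max over α ∈ {1,…,N} and k ∈ {0,1} of |σ_{α,j+k}|, define the Rusanov fluxes F^{α}_{j+1/2} = (h_{α,j}·σ_{α,j} + h_{α,j+1}·σ_{α,j+1})/2 − A_{j+1/2}·(h_{α,j+1} − h_{α,j})/2 and the updated total height h*_j = h_j − λ·(Σ_α F^{α}_{j+1/2} − Σ_α F^{α}_{j−1/2}).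 If λ·(A_{j+1/2} + A_{j−1/2}) ≤ 2 for all j, then for every j: (h*_j)² ≤ (h_j)² + λ·( A_{j+1/2}·((h_{j+1})² − (h_j)²)/2 − A_{j−1/2}·((h_j)² − (h_{j−1})²)/2 ). -/
/-- decay of the discrete potential energy in the baroclinic
prediction step with the Rusanov flux: under the time-step condition
`λ(A_{j+1/2} + A_{j−1/2}) ≤ 2`, the updated total height satisfies
`(h*_j)² ≤ (h_j)² + λ(A_{j+1/2}((h_{j+1})² − (h_j)²)/2 − A_{j−1/2}((h_j)² − (h_{j−1})²)/2)`.
Here `F α j` denotes `F^α_{j+1/2}` and `A j` denotes `A_{j+1/2}`. -/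
theorem stmt12 (N : ℕ) (hN : 1 ≤ N)
    (l : ℕ → ℝ) (hl : ∀ α ∈ Finset.Icc 1 N, 0 < l α)
    (hlsum : ∑ α ∈ Finset.Icc 1 N, l α = 1)
    (Δt Δx : ℝ) (hΔt : 0 < Δt) (hΔx : 0 < Δx)
    (lam : ℝ) (hlam : lam = Δt / Δx)
    (h : ℤ → ℝ) (hh : ∀ j, 0 ≤ h j)
    (σ : ℕ → ℤ → ℝ)
    (ha : ℕ → ℤ → ℝ) (hha : ∀ α j, ha α j = l α * h j)
    (hσsum : ∀ j, ∑ α ∈ Finset.Icc 1 N, ha α j * σ α j = 0)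
    (A : ℤ → ℝ)
    (hA : ∀ j, A j = max
      ((Finset.Icc 1 N).sup' ⟨1, Finset.mem_Icc.mpr ⟨le_refl 1, hN⟩⟩ (fun α => |σ α j|))
      ((Finset.Icc 1 N).sup' ⟨1, Finset.mem_Icc.mpr ⟨le_refl 1, hN⟩⟩ (fun α => |σ α (j + 1)|)))
    (F : ℕ → ℤ → ℝ)
    (hF : ∀ α j, F α j = (ha α j * σ α j + ha α (j + 1) * σ α (j + 1)) / 2
        - A j * (ha α (j + 1) - ha α j) / 2)
    (hstar : ℤ → ℝ)
    (hhstar : ∀ j, hstar j = h j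
        - lam * ((∑ α ∈ Finset.Icc 1 N, F α j) - ∑ α ∈ Finset.Icc 1 N, F α (j - 1)))
    (CFL : ∀ j, lam * (A j + A (j - 1)) ≤ 2) :
    ∀ j, (hstar j) ^ 2 ≤ (h j) ^ 2
      + lam * (A j * ((h (j + 1)) ^ 2 - (h j) ^ 2) / 2
        - A (j - 1) * ((h j) ^ 2 - (h (j - 1)) ^ 2) / 2) := by
  intro j
  have hhs : ∀ k, ∑ α ∈ Finset.Icc 1 N, ha α k = h k := by
    intro k
    simp only [hha, ← Finset.sum_mul, hlsum, one_mul]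
  have sumF : ∀ k, ∑ α ∈ Finset.Icc 1 N, F α k = - (A k * (h (k + 1) - h k) / 2) := by
    intro k
    have e : ∑ α ∈ Finset.Icc 1 N, F α k
        = (∑ α ∈ Finset.Icc 1 N, ha α k * σ α k) / 2
        + (∑ α ∈ Finset.Icc 1 N, ha α (k + 1) * σ α (k + 1)) / 2
        - (A k / 2) * (∑ α ∈ Finset.Icc 1 N, ha α (k + 1))
        + (A k / 2) * (∑ α ∈ Finset.Icc 1 N, ha α k) := by
      rw [Finset.sum_div, Finset.sum_div, Finset.mul_sum, Finset.mul_sum,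
        ← Finset.sum_add_distrib, ← Finset.sum_sub_distrib, ← Finset.sum_add_distrib]
      exact Finset.sum_congr rfl fun α _ => by rw [hF]; ring
    rw [e, hσsum k, hσsum (k + 1), hhs k, hhs (k + 1)]
    ring
  have hA0 : ∀ k, 0 ≤ A k := by
    intro k
    have h1 := Finset.le_sup' (fun α => |σ α k|) (Finset.mem_Icc.mpr ⟨le_refl 1, hN⟩)
    rw [hA]
    exact le_trans (abs_nonneg (σ 1 k)) (le_trans h1 (le_max_left _ _))
  have hlam0 : 0 ≤ lam := by rw [hlam]; positivity
  have hst : hstar j = h j + lam * A j / 2 * (h (j + 1) - h j)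
      - lam * A (j - 1) / 2 * (h j - h (j - 1)) := by
    rw [hhstar, sumF, sumF]
    have : (j - 1 : ℤ) + 1 = j := by ring
    rw [this]
    ring
  have cfl := CFL j
  have ha1 : 0 ≤ lam * A j := mul_nonneg hlam0 (hA0 j)
  have ha2 : 0 ≤ lam * A (j - 1) := mul_nonneg hlam0 (hA0 (j - 1))
  rw [hst]
  nlinarith [mul_nonneg (mul_nonneg ha1 (by nlinarith : (0:ℝ) ≤ 2 - lam * A j - lam * A (j - 1))) (sq_nonneg (h (j + 1) - h j)),
    mul_nonneg (mul_nonneg ha2 (by nlinarith : (0:ℝ) ≤ 2 - lam * A j - lam * A (j - 1))) (sq_nonneg (h j - h (j - 1))),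
    mul_nonneg (mul_nonneg ha1 ha2) (sq_nonneg (h (j + 1) - h (j - 1)))]
end

section
/- Let Δt, Δx > 0 with λ = Δt/Δx. For each j ∈ ℤ let h_j ≥ 0 and u_j be real numbers and F_{j+1/2} be arbitrary real numbers. Define the upwind interface velocity u_{j+1/2} = u_j if F_{j+1/2} ≥ 0 and u_{j+1/2} = u_{j+1} otherwise, the momentum flux F^{u}_{j+1/2} = u_{j+1/2}·F_{j+1/2}, the energy flux F^{E}_{j+1/2} = (u_{j+1/2})²·F_{j+1/2}/2, and the updates h*_j = h_j − λ·(F_{j+1/2} − F_{j−1/2}) and (hu)*_j = h_j·u_j − λ·(F^{u}_{j+1/2} − F^{u}_{j−1/2}). If for every j the CFL condition h_j − λ·(F_{j+1/2}⁺ + F_{j−1/2}⁻) ≥ 0 holds, then for every j: ((hu)*_j)² ≤ 2·h*_j·( h_j·(u_j)²/2 − λ·(F^{E}_{j+1/2} − F^{E}_{j−1/2}) ). -/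
theorem aux13 (c1 c2 c3 v1 v2 v3 : ℝ) (h1 : 0 ≤ c1) (h2 : 0 ≤ c2) (h3 : 0 ≤ c3) :
    (c1*v1+c2*v2+c3*v3)^2 ≤ (c1+c2+c3)*(c1*v1^2+c2*v2^2+c3*v3^2) := by
  nlinarith [mul_nonneg (mul_nonneg h1 h2) (sq_nonneg (v1-v2)),
    mul_nonneg (mul_nonneg h1 h3) (sq_nonneg (v1-v3)),
    mul_nonneg (mul_nonneg h2 h3) (sq_nonneg (v2-v3))]

/-- discrete kinetic-energy inequality for one layer of the
baroclinic prediction step, in division-free form: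
`((hu)*_j)² ≤ 2·h*_j·(h_j u_j²/2 − λ(F^E_{j+1/2} − F^E_{j−1/2}))`.
Here `F j` denotes the mass flux `F_{j+1/2}`, `uhalf j` the upwind interface
velocity `u_{j+1/2}`, and for a real `a`, `a⁺ = max a 0`, `a⁻ = max (−a) 0`. -/
theorem stmt13 (Δt Δx : ℝ) (hΔt : 0 < Δt) (hΔx : 0 < Δx)
    (lam : ℝ) (hlam : lam = Δt / Δx)
    (h u F : ℤ → ℝ) (hh : ∀ j, 0 ≤ h j)
    (uhalf : ℤ → ℝ)
    (huhalf : ∀ j, uhalf j = if 0 ≤ F j then u j else u (j + 1))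
    (Fu FE : ℤ → ℝ)
    (hFu : ∀ j, Fu j = uhalf j * F j)
    (hFE : ∀ j, FE j = (uhalf j) ^ 2 * F j / 2)
    (hstar hustar : ℤ → ℝ)
    (hhstar : ∀ j, hstar j = h j - lam * (F j - F (j - 1)))
    (hhustar : ∀ j, hustar j = h j * u j - lam * (Fu j - Fu (j - 1)))
    (CFL : ∀ j, 0 ≤ h j - lam * (max (F j) 0 + max (-(F (j - 1))) 0)) :
    ∀ j, (hustar j) ^ 2
      ≤ 2 * hstar j * (h j * (u j) ^ 2 / 2 - lam * (FE j - FE (j - 1))) := by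
  intro j
  have hl : 0 ≤ lam := by
    rw [hlam]; positivity
  have hcfl := CFL j
  have hj1 : j - 1 + 1 = j := by ring
  rw [hhustar, hhstar, hFE, hFE, hFu, hFu, huhalf, huhalf, hj1]
  rcases le_or_gt 0 (F j) with ha | ha <;> rcases le_or_gt 0 (F (j-1)) with hb | hb
  · rw [if_pos ha, if_pos hb]
    rw [max_eq_left ha, max_eq_right (by linarith)] at hcfl
    have key := aux13 (h j - lam * F j) (lam * F (j-1)) 0 (u j) (u (j-1)) 0
      (by linarith) (mul_nonneg hl hb) le_rfl
    calc _ = (((h j - lam * F j))*(u j)+(lam * F (j-1))*(u (j-1))+0*0)^2 := by ring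
      _ ≤ _ := key
      _ = _ := by ring
  · rw [if_pos ha, if_neg (not_le.mpr hb)]
    rw [max_eq_left ha] at hcfl
    have key := aux13 (h j - lam * F j + lam * F (j-1)) 0 0 (u j) 0 0
      (by nlinarith [le_max_left (-(F (j-1))) 0]) le_rfl le_rfl
    calc _ = ((h j - lam * F j + lam * F (j-1))*(u j)+0*0+0*0)^2 := by ring
      _ ≤ _ := key
      _ = _ := by ring
  · rw [if_neg (not_le.mpr ha), if_pos hb]
    rw [max_eq_right (le_of_lt ha), max_eq_right (by linarith)] at hcfl
    have key := aux13 (h j) (-(lam * F j)) (lam * F (j-1)) (u j) (u (j+1)) (u (j-1))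
      (hh j) (by nlinarith) (mul_nonneg hl hb)
    calc _ = ((h j)*(u j)+(-(lam * F j))*(u (j+1))+(lam * F (j-1))*(u (j-1)))^2 := by ring
      _ ≤ _ := key
      _ = _ := by ring
  · rw [if_neg (not_le.mpr ha), if_neg (not_le.mpr hb)]
    rw [max_eq_right (le_of_lt ha), max_eq_left (by linarith)] at hcfl
    have key := aux13 (h j + lam * F (j-1)) (-(lam * F j)) 0 (u j) (u (j+1)) 0
      (by linarith) (by nlinarith) le_rfl
    calc _ = ((h j + lam * F (j-1))*(u j)+(-(lam * F j))*(u (j+1))+0*0)^2 := by ring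
      _ ≤ _ := key
      _ = _ := by ring
end

section
/- Let N ≥ 1 and Δt > 0, and fix one grid cell. Let l₁, …, l_N > 0 with Σ_α l_α = 1, let H > 0 and set h_α = l_α·H. Let h*_α ≥ 0 and u*_α be real numbers, and let G_{1/2} = G_{N+1/2} = 0 and G_{3/2}, …, G_{N−1/2} be real numbers with h_α = h*_α + Δt·(G_{α+1/2} − G_{α−1/2}) for all α. Suppose u₁, …, u_N solve the implicit system h_α·u_α = h*_α·u*_α + Δt·(u_{α+1/2}·G_{α+1/2} − u_{α−1/2}·G_{α−1/2}) for all α, where u_{α+1/2} = u_α if G_{α+1/2} ≤ 0 and u_{α+1/2} = u_{α+1} if G_{α+1/2} > 0. Then, without any restriction on Δt, Σ_{α=1}^N h_α·(u_α)² − Σ_{α=1}^N h*_α·(u*_α)² ≤ −Δt·Σ_{α=1}^N [ (G_{α+1/2})⁺·(u_{α+1} − u_α)² + (G_{α−1/2})⁻·(u_{α−1} − u_α)² ] ≤ 0; in particular the total kinetic energy decreases. -/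
/-- the implicit correction step of the baroclinic scheme in one
cell satisfies, without any restriction on `Δt`,
`Σ_α h_α u_α² − Σ_α h*_α (u*_α)² ≤ −Δt Σ_α [(G_{α+1/2})⁺ (u_{α+1} − u_α)² + (G_{α−1/2})⁻ (u_{α−1} − u_α)²] ≤ 0`.
Here `G α` stands for `G_{α+1/2}` (so `G 0 = G_{1/2} = 0` and
`G N = G_{N+1/2} = 0`), `uhalf α` for the implicit upwind interface velocity
`u_{α+1/2}`, and for a real `a`, `a⁺ = max a 0`, `a⁻ = max (−a) 0`; the terms
for `α = N` and `α = 1` involving `u_{N+1}` and `u₀` carry vanishing factors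
since `G_{N+1/2} = G_{1/2} = 0`. -/
theorem stmt15 (N : ℕ) (hN : 1 ≤ N) (Δt : ℝ) (hΔt : 0 < Δt)
    (l : ℕ → ℝ) (hl : ∀ α ∈ Finset.Icc 1 N, 0 < l α)
    (hlsum : ∑ α ∈ Finset.Icc 1 N, l α = 1)
    (H : ℝ) (hH : 0 < H)
    (h : ℕ → ℝ) (hdef : ∀ α, h α = l α * H)
    (hstar ustar : ℕ → ℝ)
    (hhstar : ∀ α ∈ Finset.Icc 1 N, 0 ≤ hstar α)
    (G : ℕ → ℝ) (hG0 : G 0 = 0) (hGN : G N = 0)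
    (hrel : ∀ α ∈ Finset.Icc 1 N, h α = hstar α + Δt * (G α - G (α - 1)))
    (u : ℕ → ℝ)
    (uhalf : ℕ → ℝ)
    (huhalf : ∀ α, uhalf α = if G α ≤ 0 then u α else u (α + 1))
    (himpl : ∀ α ∈ Finset.Icc 1 N,
      h α * u α = hstar α * ustar α + Δt * (uhalf α * G α - uhalf (α - 1) * G (α - 1))) :
    ((∑ α ∈ Finset.Icc 1 N, h α * (u α) ^ 2)
        - ∑ α ∈ Finset.Icc 1 N, hstar α * (ustar α) ^ 2
      ≤ -Δt * ∑ α ∈ Finset.Icc 1 N,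
          (max (G α) 0 * (u (α + 1) - u α) ^ 2
            + max (-(G (α - 1))) 0 * (u (α - 1) - u α) ^ 2))
    ∧ -Δt * (∑ α ∈ Finset.Icc 1 N,
          (max (G α) 0 * (u (α + 1) - u α) ^ 2
            + max (-(G (α - 1))) 0 * (u (α - 1) - u α) ^ 2)) ≤ 0 := by

  have key : ∀ α ∈ Finset.Icc 1 N,
      h α * (u α) ^ 2 - hstar α * (ustar α) ^ 2
        + Δt * (max (G α) 0 * (u (α + 1) - u α) ^ 2
            + max (-(G (α - 1))) 0 * (u (α - 1) - u α) ^ 2)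
      ≤ Δt * (G α * uhalf α ^ 2 - G (α - 1) * uhalf (α - 1) ^ 2) := by
    intro α hα
    obtain ⟨hα1, hα2⟩ := Finset.mem_Icc.mp hα
    have hsub : α - 1 + 1 = α := Nat.succ_pred_eq_of_pos hα1
    have h1 := himpl α hα
    have h2 := hrel α hα
    have h3 := hhstar α hα
    have hu := huhalf α
    have hu' := huhalf (α - 1)
    rw [hsub] at hu'
    have h1e : h α * u α * u α
        = (hstar α * ustar α + Δt * (uhalf α * G α - uhalf (α - 1) * G (α - 1))) * u α := by
      rw [h1]
    have h2e : h α * (u α * u α)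
        = (hstar α + Δt * (G α - G (α - 1))) * (u α * u α) := by rw [h2]
    rcases le_or_gt (G α) 0 with hA | hA <;> rcases le_or_gt (G (α - 1)) 0 with hB | hB
    · rw [if_pos hA] at hu
      rw [if_pos hB] at hu'
      rw [hu, hu'] at h1e ⊢
      rw [max_eq_right hA, max_eq_left (by linarith)]
      nlinarith [mul_nonneg h3 (sq_nonneg (ustar α - u α)), h1e, h2e]
    · rw [if_pos hA] at hu
      rw [if_neg (not_le.mpr hB)] at hu'
      rw [hu, hu'] at h1e ⊢
      rw [max_eq_right hA, max_eq_right (by linarith)]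
      nlinarith [mul_nonneg h3 (sq_nonneg (ustar α - u α)), h1e, h2e]
    · rw [if_neg (not_le.mpr hA)] at hu
      rw [if_pos hB] at hu'
      rw [hu, hu'] at h1e ⊢
      rw [max_eq_left hA.le, max_eq_left (by linarith)]
      nlinarith [mul_nonneg h3 (sq_nonneg (ustar α - u α)), h1e, h2e]
    · rw [if_neg (not_le.mpr hA)] at hu
      rw [if_neg (not_le.mpr hB)] at hu'
      rw [hu, hu'] at h1e ⊢
      rw [max_eq_left hA.le, max_eq_right (by linarith)]
      nlinarith [mul_nonneg h3 (sq_nonneg (ustar α - u α)), h1e, h2e]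
  have sum1 : ∑ α ∈ Finset.Icc 1 N,
      (G α * uhalf α ^ 2 - G (α - 1) * uhalf (α - 1) ^ 2) = 0 := by
    rw [← Finset.Ico_add_one_right_eq_Icc, Finset.sum_Ico_eq_sum_range]
    have : ∀ i : ℕ, G (1 + i) * uhalf (1 + i) ^ 2 - G (1 + i - 1) * uhalf (1 + i - 1) ^ 2
        = (fun j => G j * uhalf j ^ 2) (i + 1) - (fun j => G j * uhalf j ^ 2) i := by
      intro i
      simp [Nat.add_comm 1 i]
    simp only [this]
    rw [Finset.sum_range_sub (fun j => G j * uhalf j ^ 2)]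
    simp [hG0, hGN]
  have hsum := Finset.sum_le_sum key
  rw [Finset.sum_add_distrib, Finset.sum_sub_distrib, ← Finset.mul_sum, ← Finset.mul_sum,
    sum1, mul_zero] at hsum
  have hS : 0 ≤ ∑ α ∈ Finset.Icc 1 N,
      (max (G α) 0 * (u (α + 1) - u α) ^ 2
        + max (-(G (α - 1))) 0 * (u (α - 1) - u α) ^ 2) := by
    apply Finset.sum_nonneg
    intro α _
    have := mul_nonneg (le_max_right (G α) 0) (sq_nonneg (u (α + 1) - u α))
    have := mul_nonneg (le_max_right (-(G (α - 1))) 0) (sq_nonneg (u (α - 1) - u α))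
    linarith
  constructor
  · linarith
  · nlinarith
end

section
/- Let Δt, Δx > 0 with λ = Δt/Δx. For each j ∈ ℤ let h_j ≥ 0 and σ_j be real numbers and 𝓕_{j+1/2} be arbitrary real numbers. Define the upwind interface value σ_{j+1/2} = σ_j if 𝓕_{j+1/2} ≥ 0 and σ_{j+1/2} = σ_{j+1} otherwise, and the updates h^{new}_j = h_j − λ·(𝓕_{j+1/2} − 𝓕_{j−1/2}) and (hσ)^{new}_j = h_j·σ_j − λ·(σ_{j+1/2}·𝓕_{j+1/2} − σ_{j−1/2}·𝓕_{j−1/2}). If for every j the condition h_j − λ·(𝓕_{j+1/2}⁺ + 𝓕_{j−1/2}⁻) ≥ 0 holds, then for every j: ((hσ)^{new}_j)² ≤ h^{new}_j·( h_j·(σ_j)² − λ·( (σ_{j+1/2})²·𝓕_{j+1/2} − (σ_{j−1/2})²·𝓕_{j−1/2} ) ). -/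
/-- Discrete Cauchy–Schwarz for three nonnegative weights. -/
lemma cs3 (c0 c1 c2 x y z : ℝ) (h0 : 0 ≤ c0) (h1 : 0 ≤ c1) (h2 : 0 ≤ c2) :
    (c0 * x + c1 * y + c2 * z) ^ 2
      ≤ (c0 + c1 + c2) * (c0 * x ^ 2 + c1 * y ^ 2 + c2 * z ^ 2) := by
  nlinarith [sq_nonneg (x - y), sq_nonneg (x - z), sq_nonneg (y - z),
    mul_nonneg h0 h1, mul_nonneg h0 h2, mul_nonneg h1 h2]

/-- the key inequality in the discrete entropy estimate of the
barotropic step with subcycling, in division-free form: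
`((hσ)^{new}_j)² ≤ h^{new}_j (h_j σ_j² − λ((σ_{j+1/2})² 𝓕_{j+1/2} − (σ_{j−1/2})² 𝓕_{j−1/2}))`.
Here `𝓕 j` denotes the accumulated mass flux `𝓕_{j+1/2}`, `σhalf j` the upwind
interface value `σ_{j+1/2}`, and for a real `a`, `a⁺ = max a 0`,
`a⁻ = max (−a) 0`. -/
theorem stmt16 (Δt Δx : ℝ) (hΔt : 0 < Δt) (hΔx : 0 < Δx)
    (lam : ℝ) (hlam : lam = Δt / Δx)
    (h σ 𝓕 : ℤ → ℝ) (hh : ∀ j, 0 ≤ h j)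
    (σhalf : ℤ → ℝ)
    (hσhalf : ∀ j, σhalf j = if 0 ≤ 𝓕 j then σ j else σ (j + 1))
    (hnew hσnew : ℤ → ℝ)
    (hhnew : ∀ j, hnew j = h j - lam * (𝓕 j - 𝓕 (j - 1)))
    (hhσnew : ∀ j, hσnew j = h j * σ j - lam * (σhalf j * 𝓕 j - σhalf (j - 1) * 𝓕 (j - 1)))
    (CFL : ∀ j, 0 ≤ h j - lam * (max (𝓕 j) 0 + max (-(𝓕 (j - 1))) 0)) :
    ∀ j, (hσnew j) ^ 2
      ≤ hnew j * (h j * (σ j) ^ 2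
        - lam * ((σhalf j) ^ 2 * 𝓕 j - (σhalf (j - 1)) ^ 2 * 𝓕 (j - 1))) := by
  intro j
  have hlam0 : 0 ≤ lam := by rw [hlam]; positivity
  have hCFL := CFL j
  rw [hhnew j, hhσnew j, hσhalf j, hσhalf (j - 1)]
  have hjm : j - 1 + 1 = j := by ring
  rw [hjm]
  by_cases ha : 0 ≤ 𝓕 j <;> by_cases hb : 0 ≤ 𝓕 (j - 1) <;>
    simp only [ha, hb, if_pos, if_neg, if_true, if_false] <;>
    [ (have key := cs3 (h j - lam * 𝓕 j) 0 (lam * 𝓕 (j - 1)) (σ j) 0 (σ (j - 1))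
        (by simp [max_eq_left ha, max_eq_right (by linarith : -(𝓕 (j-1)) ≤ 0)] at hCFL; linarith)
        le_rfl (mul_nonneg hlam0 hb));
      (have key := cs3 (h j - lam * 𝓕 j + lam * 𝓕 (j - 1)) 0 0 (σ j) 0 0
        (by simp [max_eq_left ha, max_eq_left (by linarith : 0 ≤ -(𝓕 (j-1)))] at hCFL; linarith)
        le_rfl le_rfl);
      (have key := cs3 (h j) (-(lam * 𝓕 j)) (lam * 𝓕 (j - 1)) (σ j) (σ (j + 1)) (σ (j - 1))
        (hh j) (by nlinarith) (mul_nonneg hlam0 hb));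
      (have key := cs3 (h j + lam * 𝓕 (j - 1)) (-(lam * 𝓕 j)) 0 (σ j) (σ (j + 1)) 0
        (by simp [max_eq_right (le_of_not_ge ha), max_eq_left (by linarith : 0 ≤ -(𝓕 (j-1)))] at hCFL; linarith)
        (by nlinarith) le_rfl) ] <;>
    nlinarith [key]
end

section
/- Let N ≥ 1, g > 0, and let l₁, …, l_N > 0 be real constants with Σ_α l_α = 1. Let h, u₁, …, u_N : ℝ × ℝ → ℝ be continuously differentiable functions of (t, x) with h > 0 everywhere, let z_b : ℝ → ℝ be continuously differentiable, and set ū = Σ_{α=1}^N l_α·u_α. Suppose that ∂_t h + ∂_x(h·ū) = 0 and, for every α, ∂_t(h·u_α) + ∂_x(h·u_α·ū + g·h²/2) = −g·h·∂_x z_b. Then the total energy E = g·h²/2 + g·h·z_b + Σ_{α=1}^N l_α·h·(u_α)²/2 satisfies the exact conservation law ∂_t E + ∂_x( g·h²·ū + g·h·z_b·ū + Σ_{α=1}^N l_α·h·(u_α)²·ū/2 ) = 0. -/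
/-!
Multiply the momentum equation of layer `α` by `u_α` and subtract `u_α² / 2` times the mass
equation: the kinetic energy `h u_α² / 2` of that layer then balances the work
`-g h u_α ∂_x (h + z_b)` of the pressure and bottom forces. Summing with the weights `l_α`
turns `Σ l_α u_α` into `ū`, so the total work is `-g h ū ∂_x (h + z_b)`, which is exactly what
the mass equation, multiplied by `g (h + z_b)`, produces in the potential energy
`g h² / 2 + g h z_b`.
-/

open Finset

section Slices

variable {𝕜 E : Type*} [NontriviallyNormedField 𝕜] [NormedAddCommGroup E] [NormedSpace 𝕜 E]
  {f : 𝕜 → 𝕜 → E} {t x : 𝕜}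

theorem differentiableAt_slice_fst
    (hf : DifferentiableAt 𝕜 (fun p : 𝕜 × 𝕜 => f p.1 p.2) (t, x)) :
    DifferentiableAt 𝕜 (fun s => f s x) t :=
  hf.comp (f := fun s => (s, x)) t (differentiableAt_id.prodMk (differentiableAt_const x))

theorem differentiableAt_slice_snd
    (hf : DifferentiableAt 𝕜 (fun p : 𝕜 × 𝕜 => f p.1 p.2) (t, x)) :
    DifferentiableAt 𝕜 (fun y => f t y) x :=
  hf.comp (f := fun y => (t, y)) x ((differentiableAt_const t).prodMk differentiableAt_id)

end Slices

section Derivatives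

variable {ι : Type*} [Fintype ι] (g : ℝ) (l : ι → ℝ) {H W : ℝ → ℝ} {U : ι → ℝ → ℝ}
  {H' W' : ℝ} {U' : ι → ℝ} {x : ℝ}

theorem hasDerivAt_momentum_flux {V : ℝ → ℝ} {V' : ℝ} (hH : HasDerivAt H H' x)
    (hV : HasDerivAt V V' x) (hW : HasDerivAt W W' x) :
    HasDerivAt (fun y => H y * V y * W y + g * H y ^ 2 / 2)
      ((H' * V x + H x * V') * W x + H x * V x * W' + g * H x * H') x :=
  (((hH.fun_mul hV).fun_mul hW).add (((hH.fun_pow 2).const_mul g).div_const 2)).congr_deriv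
    (by push_cast; ring)

theorem hasDerivAt_energy_density (z : ℝ) (hH : HasDerivAt H H' x)
    (hU : ∀ α, HasDerivAt (U α) (U' α) x) :
    HasDerivAt (fun s => g * H s ^ 2 / 2 + g * H s * z + ∑ α, l α * H s * U α s ^ 2 / 2)
      (g * H x * H' + g * H' * z
        + ∑ α, l α * (H' * U α x ^ 2 / 2 + H x * U α x * U' α)) x := by
  refine ((((hH.fun_pow 2).const_mul g).div_const 2).add ((hH.const_mul g).mul_const z)).add
    (HasDerivAt.fun_sum fun α _ =>
      ((hH.const_mul (l α)).fun_mul ((hU α).fun_pow 2)).div_const 2)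
    |>.congr_deriv ?_
  push_cast
  congr 1
  · ring
  · exact sum_congr rfl fun α _ => by ring

theorem hasDerivAt_energy_flux {Z : ℝ → ℝ} {Z' : ℝ} (hH : HasDerivAt H H' x)
    (hU : ∀ α, HasDerivAt (U α) (U' α) x) (hZ : HasDerivAt Z Z' x) (hW : HasDerivAt W W' x) :
    HasDerivAt (fun y => g * H y ^ 2 * W y + g * H y * Z y * W y
        + ∑ α, l α * H y * U α y ^ 2 * W y / 2)
      (2 * g * H x * H' * W x + g * H x ^ 2 * W' + g * (H' * Z x + H x * Z') * W x
        + g * H x * Z x * W'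
        + ∑ α, l α * ((H' * U α x ^ 2 + 2 * H x * U α x * U' α) * W x
          + H x * U α x ^ 2 * W') / 2) x := by
  refine ((((hH.fun_pow 2).const_mul g).fun_mul hW).add
      (((hH.const_mul g).fun_mul hZ).fun_mul hW)).add
    (HasDerivAt.fun_sum fun α _ =>
      (((hH.const_mul (l α)).fun_mul ((hU α).fun_pow 2)).fun_mul hW).div_const 2)
    |>.congr_deriv ?_
  push_cast
  congr 1
  · ring
  · exact sum_congr rfl fun α _ => by ring

end Derivatives

section Balance

variable (g h ht hx zx ub ubx : ℝ)

theorem layer_kinetic_energy_balance (u ut ux : ℝ) (mass : ht + (hx * ub + h * ubx) = 0)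
    (mom : ht * u + h * ut + ((hx * u + h * ux) * ub + h * u * ubx + g * h * hx)
      = -(g * h * zx)) :
    ht * u ^ 2 / 2 + h * u * ut + ((hx * u ^ 2 + 2 * h * u * ux) * ub + h * u ^ 2 * ubx) / 2
      = -(g * h * (hx + zx) * u) := by
  linear_combination u * mom - u ^ 2 / 2 * mass

theorem energy_balance {ι : Type*} [Fintype ι] (z : ℝ) (l u ut ux : ι → ℝ)
    (hub : ub = ∑ α, l α * u α) (mass : ht + (hx * ub + h * ubx) = 0)
    (mom : ∀ α, ht * u α + h * ut α
      + ((hx * u α + h * ux α) * ub + h * u α * ubx + g * h * hx) = -(g * h * zx)) :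
    g * h * ht + g * ht * z + ∑ α, l α * (ht * u α ^ 2 / 2 + h * u α * ut α)
      + (2 * g * h * hx * ub + g * h ^ 2 * ubx + g * (hx * z + h * zx) * ub + g * h * z * ubx
        + ∑ α, l α * ((hx * u α ^ 2 + 2 * h * u α * ux α) * ub + h * u α ^ 2 * ubx) / 2) = 0 := by
  have kinetic : ∑ α, l α * (ht * u α ^ 2 / 2 + h * u α * ut α)
      + ∑ α, l α * ((hx * u α ^ 2 + 2 * h * u α * ux α) * ub + h * u α ^ 2 * ubx) / 2
      = -(g * h * (hx + zx) * ub) := by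
    conv_rhs => rw [hub, mul_sum, ← sum_neg_distrib]
    rw [← sum_add_distrib]
    refine sum_congr rfl fun α _ => ?_
    linear_combination
      l α * layer_kinetic_energy_balance g h ht hx zx ub ubx _ _ _ mass (mom α)
  linear_combination (g * h + g * z) * mass + kinetic

end Balance

theorem stmt17_general (N : ℕ) (g : ℝ) (l : Fin N → ℝ)
    (h : ℝ → ℝ → ℝ) (u : Fin N → ℝ → ℝ → ℝ) (zb : ℝ → ℝ)
    (hreg : ContDiff ℝ 1 (fun p : ℝ × ℝ => h p.1 p.2))
    (hureg : ∀ α, ContDiff ℝ 1 (fun p : ℝ × ℝ => u α p.1 p.2))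
    (hzb : ContDiff ℝ 1 zb)
    (ubar : ℝ → ℝ → ℝ) (hubar : ∀ t x, ubar t x = ∑ α, l α * u α t x)
    (mass : ∀ t x, deriv (fun s => h s x) t + deriv (fun y => h t y * ubar t y) x = 0)
    (mom : ∀ α t x,
      deriv (fun s => h s x * u α s x) t
        + deriv (fun y => h t y * u α t y * ubar t y + g * (h t y) ^ 2 / 2) x
      = -(g * h t x * deriv zb x)) :
    ∀ t x,
      deriv (fun s => g * (h s x) ^ 2 / 2 + g * h s x * zb x
          + ∑ α, l α * h s x * (u α s x) ^ 2 / 2) t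
        + deriv (fun y => g * (h t y) ^ 2 * ubar t y + g * h t y * zb y * ubar t y
          + ∑ α, l α * h t y * (u α t y) ^ 2 * ubar t y / 2) x = 0 := by
  intro t x
  have slice_fst {f : ℝ → ℝ → ℝ} (hf : ContDiff ℝ 1 (fun p : ℝ × ℝ => f p.1 p.2)) :
      HasDerivAt (fun s => f s x) (deriv (fun s => f s x) t) t :=
    (differentiableAt_slice_fst (hf.differentiable one_ne_zero _)).hasDerivAt
  have slice_snd {f : ℝ → ℝ → ℝ} (hf : ContDiff ℝ 1 (fun p : ℝ × ℝ => f p.1 p.2)) :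
      HasDerivAt (fun y => f t y) (deriv (fun y => f t y) x) x :=
    (differentiableAt_slice_snd (hf.differentiable one_ne_zero _)).hasDerivAt
  have hubar_x :
      HasDerivAt (fun y => ubar t y) (∑ α, l α * deriv (fun y => u α t y) x) x := by
    simp only [hubar t]
    exact HasDerivAt.fun_sum fun α _ => (slice_snd (hureg α)).const_mul (l α)
  have hzb_x := (hzb.differentiable one_ne_zero x).hasDerivAt
  rw [(hasDerivAt_energy_density g l (zb x) (slice_fst hreg) (slice_fst <| hureg ·)).deriv,
    (hasDerivAt_energy_flux g l (slice_snd hreg) (slice_snd <| hureg ·) hzb_x hubar_x).deriv]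
  refine energy_balance g _ _ _ _ _ _ _ l _ _ _ (hubar t x) ?_ fun α => ?_
  · simpa only [((slice_snd hreg).fun_mul hubar_x).deriv] using mass t x
  · simpa only [((slice_fst hreg).fun_mul (slice_fst (hureg α))).deriv,
      (hasDerivAt_momentum_flux g (slice_snd hreg) (slice_snd (hureg α)) hubar_x).deriv]
      using mom α t x

/-- smooth solutions of the barotropic step of the multilayer
shallow water system satisfy the exact energy conservation law
`∂_t E + ∂_x(g h² ū + g h z_b ū + Σ_α l_α h u_α² ū / 2) = 0` with
`E = g h²/2 + g h z_b + Σ_α l_α h u_α²/2`.  Partial derivatives of functions of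
`(t, x)` are expressed as `deriv` of the corresponding one-variable slices. -/
theorem stmt17 (N : ℕ) (hN : 1 ≤ N) (g : ℝ) (hg : 0 < g)
    (l : Fin N → ℝ) (hl : ∀ α, 0 < l α) (hlsum : ∑ α, l α = 1)
    (h : ℝ → ℝ → ℝ) (u : Fin N → ℝ → ℝ → ℝ) (zb : ℝ → ℝ)
    (hreg : ContDiff ℝ 1 (fun p : ℝ × ℝ => h p.1 p.2))
    (hureg : ∀ α, ContDiff ℝ 1 (fun p : ℝ × ℝ => u α p.1 p.2))
    (hzb : ContDiff ℝ 1 zb)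
    (hpos : ∀ t x, 0 < h t x)
    (ubar : ℝ → ℝ → ℝ) (hubar : ∀ t x, ubar t x = ∑ α, l α * u α t x)
    (mass : ∀ t x, deriv (fun s => h s x) t + deriv (fun y => h t y * ubar t y) x = 0)
    (mom : ∀ α t x,
      deriv (fun s => h s x * u α s x) t
        + deriv (fun y => h t y * u α t y * ubar t y + g * (h t y) ^ 2 / 2) x
      = -(g * h t x * deriv zb x)) :
    ∀ t x,
      deriv (fun s => g * (h s x) ^ 2 / 2 + g * h s x * zb x
          + ∑ α, l α * h s x * (u α s x) ^ 2 / 2) t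
        + deriv (fun y => g * (h t y) ^ 2 * ubar t y + g * h t y * zb y * ubar t y
          + ∑ α, l α * h t y * (u α t y) ^ 2 * ubar t y / 2) x = 0 :=
  stmt17_general N g l h u zb hreg hureg hzb ubar hubar mass mom
end

section
/- Let N ≥ 1 and let l₁, …, l_N > 0 be real constants with Σ_α l_α = 1. Let h : ℝ → ℝ be continuously differentiable with h > 0, let u₁, …, u_N : ℝ × ℝ → ℝ be continuously differentiable in (t, x), and set ū = Σ_{α=1}^N l_α·u_α, G_{1/2} = 0 and G_{α+1/2}(t,x) = Σ_{β=1}^{α} l_β·∂_x( h·(u_β − ū) ) for α = 1, …, N (so G_{N+1/2} = 0). Define the interface velocities u_{α+1/2}(t,x) = u_α(t,x) if G_{α+1/2}(t,x) ≤ 0 and u_{α+1/2}(t,x) = u_{α+1}(t,x) if G_{α+1/2}(t,x) > 0. Suppose that for every α, ∂_t(h·u_α) + ∂_x( h·u_α·(u_α − ū) ) = (1/l_α)·( u_{α+1/2}·G_{α+1/2} − u_{α−1/2}·G_{α−1/2} ). Then the total kinetic energy satisfies, at every point, ∂_t( Σ_{α=1}^N l_α·h·(u_α)²/2 ) + ∂_x(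 Σ_{α=1}^N l_α·h·(u_α)²·(u_α − ū)/2 ) = −(1/2)·Σ_{α=1}^{N−1} (u_α − u_{α+1})²·|G_{α+1/2}| ≤ 0. -/
/-!
Multiplying the momentum equation of layer `α` by `u_α` and subtracting `u_α²/2` times the layer
mass balance `l_α ∂_x(h (u_α - ū)) = G_{α+1/2} - G_{α-1/2}` gives a local kinetic-energy balance
whose right-hand side is `u_α Δ(u G) - (u_α²/2) Δ G`. Summed over the layers, an Abel summation
(using `G_{1/2} = G_{N+1/2} = 0`, the latter because `Σ l_α = 1`) leaves one term per interface,
`G ((u_α - u_{α+1}) u_{α+1/2} - (u_α² - u_{α+1}²)/2)`, and the upwind choice of `u_{α+1/2}` makes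
it equal to `-(u_α - u_{α+1})² |G| / 2`.
-/

open Finset

theorem upwind_flux_dissipation (a b g : ℝ) :
    (a - b) * ((if g ≤ 0 then a else b) * g) - (a ^ 2 / 2 - b ^ 2 / 2) * g
      = -(1 / 2) * ((a - b) ^ 2 * |g|) := by
  split_ifs with hg
  · rw [abs_of_nonpos hg]; ring
  · rw [abs_of_pos (not_le.mp hg)]; ring

theorem Finset.sum_Icc_sub_sum_Icc_pred {M : Type*} [AddCommGroup M] (f : ℕ → M) {n : ℕ}
    (hn : 1 ≤ n) : ∑ i ∈ Icc 1 n, f i - ∑ i ∈ Icc 1 (n - 1), f i = f n := by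
  obtain ⟨m, rfl⟩ : ∃ m, n = m + 1 := ⟨n - 1, by omega⟩
  rw [Nat.add_sub_cancel, sum_Icc_succ_top hn, add_sub_cancel_left]

theorem Finset.sum_Icc_mul_sub_pred_add {R : Type*} [CommRing R] (v F : ℕ → R) (hF : F 0 = 0)
    (N : ℕ) : ∑ α ∈ Icc 1 N, v α * (F α - F (α - 1))
      = v N * F N + ∑ α ∈ Icc 1 (N - 1), (v α - v (α + 1)) * F α := by
  induction N with
  | zero => simp [hF]
  | succ n ih =>
    rw [sum_Icc_succ_top (by omega), ih, Nat.add_sub_cancel]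
    rcases n with _ | m
    · simp [hF]
    · rw [Nat.add_sub_cancel, sum_Icc_succ_top (by omega : 1 ≤ m + 1)]
      ring

theorem Finset.sum_Icc_mul_sub_pred {R : Type*} [CommRing R] (v F : ℕ → R) {N : ℕ}
    (h0 : F 0 = 0) (hN : F N = 0) :
    ∑ α ∈ Icc 1 N, v α * (F α - F (α - 1)) = ∑ α ∈ Icc 1 (N - 1), (v α - v (α + 1)) * F α := by
  rw [sum_Icc_mul_sub_pred_add v F h0, hN, mul_zero, zero_add]

theorem sum_upwind_energy_exchange (u G uhalf : ℕ → ℝ) {N : ℕ} (h0 : G 0 = 0) (hN : G N = 0)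
    (huhalf : ∀ α, uhalf α = if G α ≤ 0 then u α else u (α + 1)) :
    ∑ α ∈ Icc 1 N, (u α * (uhalf α * G α - uhalf (α - 1) * G (α - 1))
        - u α ^ 2 / 2 * (G α - G (α - 1)))
      = -(1 / 2) * ∑ α ∈ Icc 1 (N - 1), (u α - u (α + 1)) ^ 2 * |G α| := by
  rw [sum_sub_distrib, sum_Icc_mul_sub_pred u (fun α => uhalf α * G α) (by simp [h0])
      (by simp [hN]), sum_Icc_mul_sub_pred (fun α => u α ^ 2 / 2) G h0 hN, ← sum_sub_distrib,
    mul_sum]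
  exact sum_congr rfl fun α _ => by rw [huhalf, upwind_flux_dissipation]

section Slices

variable {𝕜 E F G : Type*} [NontriviallyNormedField 𝕜] [NormedAddCommGroup E] [NormedSpace 𝕜 E]
  [NormedAddCommGroup F] [NormedSpace 𝕜 F] [NormedAddCommGroup G] [NormedSpace 𝕜 G]
  {f : E → F → G} {t : E} {x : F}

theorem DifferentiableAt.uncurry_left
    (hf : DifferentiableAt 𝕜 (fun p : E × F => f p.1 p.2) (t, x)) :
    DifferentiableAt 𝕜 (fun s => f s x) t :=
  hf.comp (f := fun s : E => (s, x)) t (differentiableAt_id.prodMk (differentiableAt_const x))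

theorem DifferentiableAt.uncurry_right
    (hf : DifferentiableAt 𝕜 (fun p : E × F => f p.1 p.2) (t, x)) :
    DifferentiableAt 𝕜 (fun y => f t y) x :=
  hf.comp x ((differentiableAt_const t).prodMk differentiableAt_id)

end Slices

theorem differentiableAt_of_eq_sum {ι : Type*} {s : Finset ι} {l : ι → ℝ} {v : ι → ℝ → ℝ}
    {ubar : ℝ → ℝ} {x : ℝ} (hubar : ∀ y, ubar y = ∑ i ∈ s, l i * v i y)
    (hv : ∀ i ∈ s, DifferentiableAt ℝ (v i) x) : DifferentiableAt ℝ ubar x := by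
  rw [funext hubar]
  exact .fun_sum fun i hi => (hv i hi).const_mul (l i)

theorem sum_mul_deriv_mul_sub_eq_zero {ι : Type*} {s : Finset ι} {l : ι → ℝ} {v : ι → ℝ → ℝ}
    {h ubar : ℝ → ℝ} {x : ℝ} (hl : ∑ i ∈ s, l i = 1) (hubar : ∀ y, ubar y = ∑ i ∈ s, l i * v i y)
    (hh : DifferentiableAt ℝ h x) (hv : ∀ i ∈ s, DifferentiableAt ℝ (v i) x) :
    ∑ i ∈ s, l i * deriv (fun y => h y * (v i y - ubar y)) x = 0 := by
  have hdiff : ∀ i ∈ s, DifferentiableAt ℝ (fun y => h y * (v i y - ubar y)) x := fun i hi =>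
    hh.fun_mul ((hv i hi).fun_sub (differentiableAt_of_eq_sum hubar hv))
  have hzero : (fun y => ∑ i ∈ s, l i * (h y * (v i y - ubar y))) = fun _ => 0 := by
    funext y
    simp only [mul_left_comm (l _), ← mul_sum, mul_sub, sum_sub_distrib, ← sum_mul, hubar, hl,
      one_mul, sub_self]
  rw [← deriv_const x (0 : ℝ), ← hzero, deriv_fun_sum fun i hi => (hdiff i hi).const_mul (l i)]
  exact sum_congr rfl fun i hi => (deriv_const_mul _ (hdiff i hi)).symm

theorem deriv_const_mul_sq_div_two {u : ℝ → ℝ} {t : ℝ} (c a : ℝ) (hu : DifferentiableAt ℝ u t) :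
    deriv (fun s => c * a * u s ^ 2 / 2) t = c * (u t * deriv (fun s => a * u s) t) := by
  rw [((hu.hasDerivAt.fun_pow 2).const_mul (c * a)).div_const 2 |>.deriv,
    (hu.hasDerivAt.const_mul a).deriv]
  ring

theorem deriv_const_mul_mul_sq_mul_div_two {h u w : ℝ → ℝ} {x : ℝ} (c : ℝ)
    (hh : DifferentiableAt ℝ h x) (hu : DifferentiableAt ℝ u x) (hw : DifferentiableAt ℝ w x) :
    deriv (fun y => c * h y * u y ^ 2 * w y / 2) x
      = c * (u x * deriv (fun y => h y * u y * w y) x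
          - u x ^ 2 / 2 * deriv (fun y => h y * w y) x) := by
  rw [(((hh.hasDerivAt.const_mul c).fun_mul (hu.hasDerivAt.fun_pow 2)).fun_mul hw.hasDerivAt)
      |>.div_const 2 |>.deriv,
    ((hh.hasDerivAt.fun_mul hu.hasDerivAt).fun_mul hw.hasDerivAt).deriv,
    (hh.hasDerivAt.fun_mul hw.hasDerivAt).deriv]
  ring

theorem layer_kinetic_energy_balance_s18 {v : ℝ → ℝ → ℝ} {h w : ℝ → ℝ} {c ΔF ΔG t x : ℝ}
    (hc : c ≠ 0) (hvt : DifferentiableAt ℝ (fun s => v s x) t)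
    (hvx : DifferentiableAt ℝ (fun y => v t y) x) (hh : DifferentiableAt ℝ h x)
    (hw : DifferentiableAt ℝ w x)
    (hmom : deriv (fun s => h x * v s x) t + deriv (fun y => h y * v t y * w y) x = 1 / c * ΔF)
    (hmass : c * deriv (fun y => h y * w y) x = ΔG) :
    deriv (fun s => c * h x * v s x ^ 2 / 2) t + deriv (fun y => c * h y * v t y ^ 2 * w y / 2) x
      = v t x * ΔF - v t x ^ 2 / 2 * ΔG := by
  have hmom' : c * (deriv (fun s => h x * v s x) t + deriv (fun y => h y * v t y * w y) x) = ΔF :=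
    by rw [hmom, ← mul_assoc, mul_one_div_cancel hc, one_mul]
  rw [deriv_const_mul_sq_div_two _ _ hvt, deriv_const_mul_mul_sq_mul_div_two _ hh hvx hw]
  linear_combination v t x * hmom' - v t x ^ 2 / 2 * hmass

theorem stmt18_general (N : ℕ)
    (l : ℕ → ℝ) (hl : ∀ α ∈ Finset.Icc 1 N, 0 < l α)
    (hlsum : ∑ α ∈ Finset.Icc 1 N, l α = 1)
    (h : ℝ → ℝ) (hreg : ContDiff ℝ 1 h)
    (u : ℕ → ℝ → ℝ → ℝ)
    (hureg : ∀ α ∈ Finset.Icc 1 N, ContDiff ℝ 1 (fun p : ℝ × ℝ => u α p.1 p.2))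
    (ubar : ℝ → ℝ → ℝ)
    (hubar : ∀ t x, ubar t x = ∑ α ∈ Finset.Icc 1 N, l α * u α t x)
    (G : ℕ → ℝ → ℝ → ℝ)
    (hG : ∀ α t x, G α t x = ∑ β ∈ Finset.Icc 1 α,
        l β * deriv (fun y => h y * (u β t y - ubar t y)) x)
    (uhalf : ℕ → ℝ → ℝ → ℝ)
    (huhalf : ∀ α t x, uhalf α t x = if G α t x ≤ 0 then u α t x else u (α + 1) t x)
    (mom : ∀ α ∈ Finset.Icc 1 N, ∀ t x,
      deriv (fun s => h x * u α s x) t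
        + deriv (fun y => h y * u α t y * (u α t y - ubar t y)) x
      = (1 / l α) * (uhalf α t x * G α t x - uhalf (α - 1) t x * G (α - 1) t x)) :
    ∀ t x,
      (deriv (fun s => ∑ α ∈ Finset.Icc 1 N, l α * h x * (u α s x) ^ 2 / 2) t
        + deriv (fun y => ∑ α ∈ Finset.Icc 1 N,
            l α * h y * (u α t y) ^ 2 * (u α t y - ubar t y) / 2) x
        = -(1 / 2) * ∑ α ∈ Finset.Icc 1 (N - 1),
            (u α t x - u (α + 1) t x) ^ 2 * |G α t x|)
      ∧ -(1 / 2) * (∑ α ∈ Finset.Icc 1 (N - 1),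
            (u α t x - u (α + 1) t x) ^ 2 * |G α t x|) ≤ 0 := by
  intro t x
  have hux : ∀ α ∈ Icc 1 N, DifferentiableAt ℝ (fun y => u α t y) x := fun α hα =>
    .uncurry_right ((hureg α hα).differentiable one_ne_zero (t, x))
  have hut : ∀ α ∈ Icc 1 N, DifferentiableAt ℝ (fun s => u α s x) t := fun α hα =>
    .uncurry_left ((hureg α hα).differentiable one_ne_zero (t, x))
  have hhx : DifferentiableAt ℝ h x := hreg.differentiable one_ne_zero x
  have hubarx : DifferentiableAt ℝ (ubar t) x := differentiableAt_of_eq_sum (hubar t) hux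
  have hG0 : G 0 t x = 0 := by simp [hG]
  have hGN : G N t x = 0 := by
    rw [hG]
    exact sum_mul_deriv_mul_sub_eq_zero (v := fun α y => u α t y) hlsum (hubar t) hhx hux
  have hbalance :
      deriv (fun s => ∑ α ∈ Icc 1 N, l α * h x * (u α s x) ^ 2 / 2) t
        + deriv (fun y => ∑ α ∈ Icc 1 N, l α * h y * (u α t y) ^ 2 * (u α t y - ubar t y) / 2) x
      = -(1 / 2) * ∑ α ∈ Icc 1 (N - 1), (u α t x - u (α + 1) t x) ^ 2 * |G α t x| := by
    rw [deriv_fun_sum fun α hα => by have := hut α hα; fun_prop,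
      deriv_fun_sum fun α hα => by have := hux α hα; fun_prop, ← sum_add_distrib,
      ← sum_upwind_energy_exchange (u · t x) (G · t x) (uhalf · t x) hG0 hGN (huhalf · t x)]
    refine sum_congr rfl fun α hα => layer_kinetic_energy_balance_s18 (hl α hα).ne' (hut α hα)
      (hux α hα) hhx ((hux α hα).fun_sub hubarx) (mom α hα t x) ?_
    rw [hG, hG, sum_Icc_sub_sum_Icc_pred _ (mem_Icc.mp hα).1]
  exact ⟨hbalance, mul_nonpos_of_nonpos_of_nonneg (by norm_num)
    (sum_nonneg fun α _ => mul_nonneg (sq_nonneg _) (abs_nonneg _))⟩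

/-- smooth solutions of the baroclinic step of the multilayer
shallow water system satisfy the kinetic-energy identity
`∂_t(Σ_α l_α h u_α²/2) + ∂_x(Σ_α l_α h u_α² (u_α − ū)/2)
  = −(1/2) Σ_{α=1}^{N−1} (u_α − u_{α+1})² |G_{α+1/2}| ≤ 0`.
Here `h` is a function of `x` alone (constant in time during the baroclinic
step), `G α` stands for the mass-exchange term
`G_{α+1/2} = Σ_{β=1}^α l_β ∂_x(h (u_β − ū))` (so `G 0 = G_{1/2} = 0` as an
empty sum), and `uhalf α` for the upwind interface velocity `u_{α+1/2}`.
Partial derivatives are expressed as `deriv` of one-variable slices. -/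
theorem stmt18 (N : ℕ) (hN : 1 ≤ N)
    (l : ℕ → ℝ) (hl : ∀ α ∈ Finset.Icc 1 N, 0 < l α)
    (hlsum : ∑ α ∈ Finset.Icc 1 N, l α = 1)
    (h : ℝ → ℝ) (hreg : ContDiff ℝ 1 h) (hpos : ∀ x, 0 < h x)
    (u : ℕ → ℝ → ℝ → ℝ)
    (hureg : ∀ α ∈ Finset.Icc 1 N, ContDiff ℝ 1 (fun p : ℝ × ℝ => u α p.1 p.2))
    (ubar : ℝ → ℝ → ℝ)
    (hubar : ∀ t x, ubar t x = ∑ α ∈ Finset.Icc 1 N, l α * u α t x)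
    (G : ℕ → ℝ → ℝ → ℝ)
    (hG : ∀ α t x, G α t x = ∑ β ∈ Finset.Icc 1 α,
        l β * deriv (fun y => h y * (u β t y - ubar t y)) x)
    (uhalf : ℕ → ℝ → ℝ → ℝ)
    (huhalf : ∀ α t x, uhalf α t x = if G α t x ≤ 0 then u α t x else u (α + 1) t x)
    (mom : ∀ α ∈ Finset.Icc 1 N, ∀ t x,
      deriv (fun s => h x * u α s x) t
        + deriv (fun y => h y * u α t y * (u α t y - ubar t y)) x
      = (1 / l α) * (uhalf α t x * G α t x - uhalf (α - 1) t x * G (α - 1) t x)) :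
    ∀ t x,
      (deriv (fun s => ∑ α ∈ Finset.Icc 1 N, l α * h x * (u α s x) ^ 2 / 2) t
        + deriv (fun y => ∑ α ∈ Finset.Icc 1 N,
            l α * h y * (u α t y) ^ 2 * (u α t y - ubar t y) / 2) x
        = -(1 / 2) * ∑ α ∈ Finset.Icc 1 (N - 1),
            (u α t x - u (α + 1) t x) ^ 2 * |G α t x|)
      ∧ -(1 / 2) * (∑ α ∈ Finset.Icc 1 (N - 1),
            (u α t x - u (α + 1) t x) ^ 2 * |G α t x|) ≤ 0 :=
  stmt18_general N l hl hlsum h hreg u hureg ubar hubar G hG uhalf huhalf mom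
end

section
/- Let N ≥ 1, g > 0, and let l₁, …, l_N > 0 be real constants with Σ_α l_α = 1. Let h, u₁, …, u_N, T₁, …, T_N : ℝ × ℝ → ℝ be continuously differentiable functions of (t, x) with h > 0 everywhere, let z_b : ℝ → ℝ be continuously differentiable, and suppose ∂_t h + ∂_x(h·ū) = 0, ∂_t(h·u_α) + ∂_x(h·u_α·ū + g·h²/2) = −g·h·∂_x z_b, and ∂_t(h·T_α) + ∂_x(h·ū·T_α) = 0 for all α, where ū = Σ_{β=1}^N l_β·u_β. Then, setting σ_α = u_α − ū, the following equations hold: ∂_t(h·ū) + ∂_x(h·ū² + g·h²/2) = −g·h·∂_x z_b, and ∂_t(h·σ_α) + ∂_x(h·ū·σ_α) = 0 for every α; moreover Σ_{α=1}^N l_α·h·σ_α = 0 identically. -/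
/-!
Averaging the layer momentum equations with the weights `l_α` (which sum to `1`) gives the
momentum equation of the mean flow, because the weighted average of `h u_α ū` is `h ū²`.
Subtracting it from the equation of layer `α` removes both the pressure term `g h²/2` and the
topographic source, leaving the transport equation of `h σ_α`. The last identity is the
definition of `ū` as the weighted mean of the `u_α`.
-/

open Finset

section Slices

variable {𝕜 : Type*} [NontriviallyNormedField 𝕜]
  {E F G : Type*} [NormedAddCommGroup E] [NormedSpace 𝕜 E]
  [NormedAddCommGroup F] [NormedSpace 𝕜 F] [NormedAddCommGroup G] [NormedSpace 𝕜 G]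
  {f : E → F → G}

theorem Differentiable.slice_left (hf : Differentiable 𝕜 (fun p : E × F => f p.1 p.2)) (y : F) :
    Differentiable 𝕜 (fun x => f x y) :=
  hf.comp (differentiable_id.prodMk (differentiable_const y))

theorem Differentiable.slice_right (hf : Differentiable 𝕜 (fun p : E × F => f p.1 p.2))
    (x : E) : Differentiable 𝕜 (fun y => f x y) :=
  hf.comp ((differentiable_const x).prodMk differentiable_id)

end Slices

section BalanceLaws

variable {ι : Type*} [Fintype ι] {t x S : ℝ}

theorem deriv_add_deriv_weighted_sum (l : ι → ℝ) (hl : ∑ i, l i = 1) {A B : ι → ℝ → ℝ}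
    (hA : ∀ i, DifferentiableAt ℝ (A i) t) (hB : ∀ i, DifferentiableAt ℝ (B i) x)
    (hAB : ∀ i, deriv (A i) t + deriv (B i) x = S) :
    deriv (fun s => ∑ i, l i * A i s) t + deriv (fun y => ∑ i, l i * B i y) x = S := by
  rw [deriv_fun_sum fun i _ => (hA i).const_mul _, deriv_fun_sum fun i _ => (hB i).const_mul _,
    ← sum_add_distrib]
  calc ∑ i, (deriv (fun s => l i * A i s) t + deriv (fun y => l i * B i y) x)
      = ∑ i, l i * S := sum_congr rfl fun i _ => by
        rw [deriv_const_mul _ (hA i), deriv_const_mul _ (hB i), ← mul_add, hAB i]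
    _ = S := by rw [← sum_mul, hl, one_mul]

theorem deriv_add_deriv_sub_eq_zero {A A' B B' : ℝ → ℝ}
    (hA : DifferentiableAt ℝ A t) (hA' : DifferentiableAt ℝ A' t)
    (hB : DifferentiableAt ℝ B x) (hB' : DifferentiableAt ℝ B' x)
    (hAB : deriv A t + deriv B x = S) (hAB' : deriv A' t + deriv B' x = S) :
    deriv (fun s => A s - A' s) t + deriv (fun y => B y - B' y) x = 0 := by
  rw [deriv_fun_sub hA hA', deriv_fun_sub hB hB']
  linarith

end BalanceLaws

section WeightedMean

variable {ι : Type*} [Fintype ι] {l u : ι → ℝ} {ubar : ℝ}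

theorem mul_weighted_mean_eq_sum (hubar : ubar = ∑ i, l i * u i) (c : ℝ) :
    c * ubar = ∑ i, l i * (c * u i) := by
  rw [hubar, mul_sum]
  exact sum_congr rfl fun i _ => by ring

theorem mean_flux_eq_sum (hl : ∑ i, l i = 1) (hubar : ubar = ∑ i, l i * u i) (c p : ℝ) :
    c * ubar ^ 2 + p = ∑ i, l i * (c * u i * ubar + p) := by
  have hsplit :
      ∑ i, l i * (c * u i * ubar + p) = (c * ubar) * ∑ i, l i * u i + (∑ i, l i) * p := by
    rw [mul_sum, sum_mul, ← sum_add_distrib]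
    exact sum_congr rfl fun i _ => by ring
  rw [hsplit, ← hubar, hl]
  ring

theorem sum_weight_mul_sub_weighted_mean_eq_zero (hl : ∑ i, l i = 1)
    (hubar : ubar = ∑ i, l i * u i) (c : ℝ) : ∑ i, l i * c * (u i - ubar) = 0 := by
  calc ∑ i, l i * c * (u i - ubar) = c * ∑ i, l i * u i - c * ubar * ∑ i, l i := by
        rw [mul_sum, mul_sum, ← sum_sub_distrib]
        exact sum_congr rfl fun i _ => by ring
    _ = 0 := by rw [← hubar, hl]; ring

end WeightedMean

theorem stmt19_general (N : ℕ) (g : ℝ)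
    (l : Fin N → ℝ) (hlsum : ∑ α, l α = 1)
    (h : ℝ → ℝ → ℝ) (u : Fin N → ℝ → ℝ → ℝ) (zb : ℝ → ℝ)
    (hreg : ContDiff ℝ 1 (fun p : ℝ × ℝ => h p.1 p.2))
    (hureg : ∀ α, ContDiff ℝ 1 (fun p : ℝ × ℝ => u α p.1 p.2))
    (ubar : ℝ → ℝ → ℝ) (hubar : ∀ t x, ubar t x = ∑ β, l β * u β t x)
    (σ : Fin N → ℝ → ℝ → ℝ) (hσ : ∀ α t x, σ α t x = u α t x - ubar t x)
    (mom : ∀ α t x,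
      deriv (fun s => h s x * u α s x) t
        + deriv (fun y => h t y * u α t y * ubar t y + g * (h t y) ^ 2 / 2) x
      = -(g * h t x * deriv zb x)) :
    (∀ t x,
      deriv (fun s => h s x * ubar s x) t
        + deriv (fun y => h t y * (ubar t y) ^ 2 + g * (h t y) ^ 2 / 2) x
      = -(g * h t x * deriv zb x))
    ∧ (∀ α t x,
      deriv (fun s => h s x * σ α s x) t
        + deriv (fun y => h t y * ubar t y * σ α t y) x = 0)
    ∧ (∀ t x, ∑ α, l α * h t x * σ α t x = 0) := by
  have dh := hreg.differentiable one_ne_zero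
  have du := fun α => (hureg α).differentiable one_ne_zero
  have dubar : Differentiable ℝ (fun p : ℝ × ℝ => ubar p.1 p.2) := by
    simp only [hubar]
    fun_prop
  have dh_t := dh.slice_left; have du_t := fun α => (du α).slice_left
  have dubar_t := dubar.slice_left
  have dh_x := dh.slice_right; have du_x := fun α => (du α).slice_right
  have dubar_x := dubar.slice_right
  have mean : ∀ t x,
      deriv (fun s => h s x * ubar s x) t
        + deriv (fun y => h t y * (ubar t y) ^ 2 + g * (h t y) ^ 2 / 2) x
      = -(g * h t x * deriv zb x) := fun t x => by
    rw [funext fun s => mul_weighted_mean_eq_sum (hubar s x) (h s x),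
      funext fun y => mean_flux_eq_sum hlsum (hubar t y) (h t y) (g * h t y ^ 2 / 2)]
    exact deriv_add_deriv_weighted_sum l hlsum (fun α => by fun_prop) (fun α => by fun_prop)
      (fun α => mom α t x)
  refine ⟨mean, fun α t x => ?_, fun t x => ?_⟩
  · have hσA : ∀ s, h s x * σ α s x = h s x * u α s x - h s x * ubar s x := fun s => by
      rw [hσ]; ring
    have hσB : ∀ y, h t y * ubar t y * σ α t y
        = (h t y * u α t y * ubar t y + g * h t y ^ 2 / 2)
          - (h t y * ubar t y ^ 2 + g * h t y ^ 2 / 2) := fun y => by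
      rw [hσ]; ring
    rw [funext hσA, funext hσB]
    exact deriv_add_deriv_sub_eq_zero (by fun_prop) (by fun_prop) (by fun_prop) (by fun_prop)
      (mom α t x) (mean t x)
  · simp only [hσ]
    exact sum_weight_mul_sub_weighted_mean_eq_zero hlsum (hubar t x) (h t x)

/-- reformulation of the barotropic system.  If `(h, u_α, T_α)`
solve the barotropic system `∂_t h + ∂_x(h ū) = 0`,
`∂_t(h u_α) + ∂_x(h u_α ū + g h²/2) = −g h ∂_x z_b`,
`∂_t(h T_α) + ∂_x(h ū T_α) = 0`, then with `σ_α = u_α − ū` the equations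
`∂_t(h ū) + ∂_x(h ū² + g h²/2) = −g h ∂_x z_b` and
`∂_t(h σ_α) + ∂_x(h ū σ_α) = 0` hold, and `Σ_α l_α h σ_α = 0` identically.
Partial derivatives are expressed as `deriv` of one-variable slices. -/
theorem stmt19 (N : ℕ) (hN : 1 ≤ N) (g : ℝ) (hg : 0 < g)
    (l : Fin N → ℝ) (hl : ∀ α, 0 < l α) (hlsum : ∑ α, l α = 1)
    (h : ℝ → ℝ → ℝ) (u T : Fin N → ℝ → ℝ → ℝ) (zb : ℝ → ℝ)
    (hreg : ContDiff ℝ 1 (fun p : ℝ × ℝ => h p.1 p.2))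
    (hureg : ∀ α, ContDiff ℝ 1 (fun p : ℝ × ℝ => u α p.1 p.2))
    (hTreg : ∀ α, ContDiff ℝ 1 (fun p : ℝ × ℝ => T α p.1 p.2))
    (hzb : ContDiff ℝ 1 zb)
    (hpos : ∀ t x, 0 < h t x)
    (ubar : ℝ → ℝ → ℝ) (hubar : ∀ t x, ubar t x = ∑ β, l β * u β t x)
    (σ : Fin N → ℝ → ℝ → ℝ) (hσ : ∀ α t x, σ α t x = u α t x - ubar t x)
    (mass : ∀ t x, deriv (fun s => h s x) t + deriv (fun y => h t y * ubar t y) x = 0)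
    (mom : ∀ α t x,
      deriv (fun s => h s x * u α s x) t
        + deriv (fun y => h t y * u α t y * ubar t y + g * (h t y) ^ 2 / 2) x
      = -(g * h t x * deriv zb x))
    (trac : ∀ α t x,
      deriv (fun s => h s x * T α s x) t
        + deriv (fun y => h t y * ubar t y * T α t y) x = 0) :
    (∀ t x,
      deriv (fun s => h s x * ubar s x) t
        + deriv (fun y => h t y * (ubar t y) ^ 2 + g * (h t y) ^ 2 / 2) x
      = -(g * h t x * deriv zb x))
    ∧ (∀ α t x,
      deriv (fun s => h s x * σ α s x) t
        + deriv (fun y => h t y * ubar t y * σ α t y) x = 0)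
    ∧ (∀ t x, ∑ α, l α * h t x * σ α t x = 0) :=
  stmt19_general N g l hlsum h u zb hreg hureg ubar hubar σ hσ mom
end
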